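/- arXiv:2601.13602 — 9 statements merged into one kernel-verified Lean document; each statement's English description precedes it below -/
import Mathlib

section
/- Let k ≥ 1, let m₁,…,m_k > 0 and n₁,…,n_k > 0, and let U be a linear isometry equivalence of EuclideanSpace ℝ (Fin k) onto itself (an orthogonal transformation). Let P be the pushforward under U of the product measure ⨂_{ℓ} gaussianReal 0 m_ℓ (the product over ℓ ∈ Fin k of centered one-dimensional Gaussian measures with variance m_ℓ), and let Q be the pushforward under U of ⨂_{ℓ} gaussianReal 0 n_ℓ. Then the Kullback–Leibler divergence satisfies klDiv P Q = ENNReal.ofReal( (1/2) · Σ_{ℓ=1}^{k} ( m_ℓ/n_ℓ − Real.log(m_ℓ/n_ℓ) − 1 ) ). -/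
open MeasureTheory ProbabilityTheory Classical

/-- The Kullback–Leibler divergence of measures, valued in `ℝ≥0∞`. -/
noncomputable def klDiv {Ω : Type*} [MeasurableSpace Ω] (P Q : Measure Ω) : ENNReal :=
  if P ≪ Q ∧ Integrable (llr P Q) P then ENNReal.ofReal (∫ x, llr P Q x ∂P) else ⊤

/-! Pushing both measures forward along the same measurable bijection does not change the
Kullback–Leibler divergence (data processing applied to the bijection and to its inverse), so `U`
and the identification with `EuclideanSpace` can be dropped. For product measures the
Radon–Nikodym derivative factorises coordinatewise, hence the log-likelihood ratio is a sum of
one-dimensional ones and the divergence is additive. Between one-dimensional Gaussians the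
log-likelihood ratio is a quadratic polynomial, whose expectation only involves the first two
moments. -/

open Real

section
variable {α β : Type*} [MeasurableSpace α] [MeasurableSpace β]

lemma klDiv_eq_informationTheory_klDiv (μ ν : Measure α) [IsProbabilityMeasure μ]
    [IsProbabilityMeasure ν] : klDiv μ ν = InformationTheory.klDiv μ ν := by
  by_cases h : μ ≪ ν ∧ Integrable (llr μ ν) μ
  · rw [klDiv, if_pos h, InformationTheory.klDiv_of_ac_of_integrable h.1 h.2]
    simp
  · rw [klDiv, if_neg h, eq_comm, InformationTheory.klDiv_eq_top_iff]
    exact fun hac hint => h ⟨hac, hint⟩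

lemma klDiv_map_measurableEquiv (e : α ≃ᵐ β) (μ ν : Measure α) [IsProbabilityMeasure μ]
    [IsProbabilityMeasure ν] : klDiv (μ.map e) (ν.map e) = klDiv μ ν := by
  have : IsProbabilityMeasure (μ.map e) :=
    Measure.isProbabilityMeasure_map e.measurable.aemeasurable
  have : IsProbabilityMeasure (ν.map e) :=
    Measure.isProbabilityMeasure_map e.measurable.aemeasurable
  simp only [klDiv_eq_informationTheory_klDiv]
  refine le_antisymm (InformationTheory.klDiv_map_le μ ν e.measurable) ?_
  simpa only [MeasurableEquiv.map_symm_map] using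
    InformationTheory.klDiv_map_le (μ.map e) (ν.map e) e.symm.measurable

end

section
variable {ι : Type*} [Fintype ι] {X : ι → Type*} [∀ i, MeasurableSpace (X i)]
  {μ ν : (i : ι) → Measure (X i)} [∀ i, IsProbabilityMeasure (ν i)]

lemma pi_eq_withDensity_prod_rnDeriv [∀ i, SigmaFinite (μ i)] (hac : ∀ i, μ i ≪ ν i) :
    Measure.pi μ = (Measure.pi ν).withDensity fun x => ∏ i, (μ i).rnDeriv (ν i) (x i) := by
  -- the coordinates are independent under `Measure.pi ν`, so the integral of a product factorises
  refine Measure.pi_eq fun s hs => ?_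
  have hind : (Set.univ.pi s).indicator (fun x => ∏ i, (μ i).rnDeriv (ν i) (x i))
      = fun x => ∏ i, (s i).indicator ((μ i).rnDeriv (ν i)) (x i) := by
    ext x
    simp [Set.indicator, Fintype.prod_ite_zero]
  rw [withDensity_apply _ (MeasurableSet.univ_pi hs),
    ← lintegral_indicator (MeasurableSet.univ_pi hs), hind,
    lintegral_prod_eq_prod_lintegral_of_indepFun Finset.univ _
      (iIndepFun_pi fun i => ((Measure.measurable_rnDeriv _ _).indicator (hs i)).aemeasurable)
      fun i => ((Measure.measurable_rnDeriv _ _).indicator (hs i)).comp (measurable_pi_apply i)]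
  refine Finset.prod_congr rfl fun i _ => ?_
  rw [(measurePreserving_eval ν i).lintegral_comp
      ((Measure.measurable_rnDeriv _ _).indicator (hs i)),
    lintegral_indicator (hs i), Measure.setLIntegral_rnDeriv (hac i)]

lemma pi_absolutelyContinuous_pi [∀ i, SigmaFinite (μ i)] (hac : ∀ i, μ i ≪ ν i) :
    Measure.pi μ ≪ Measure.pi ν :=
  pi_eq_withDensity_prod_rnDeriv hac ▸ withDensity_absolutelyContinuous _ _

lemma llr_pi_ae_eq_sum [∀ i, SigmaFinite (μ i)] (hac : ∀ i, μ i ≪ ν i) :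
    llr (Measure.pi μ) (Measure.pi ν) =ᵐ[Measure.pi μ] fun x => ∑ i, llr (μ i) (ν i) (x i) := by
  have hρ : Measurable fun x : (i : ι) → X i => ∏ i, (μ i).rnDeriv (ν i) (x i) :=
    Finset.measurable_prod _ fun i _ =>
      (Measure.measurable_rnDeriv _ _).comp (measurable_pi_apply i)
  have hrn : (Measure.pi μ).rnDeriv (Measure.pi ν) =ᵐ[Measure.pi μ]
      fun x => ∏ i, (μ i).rnDeriv (ν i) (x i) := by
    refine (pi_absolutelyContinuous_pi hac).ae_le ?_
    have := Measure.rnDeriv_withDensity (Measure.pi ν) hρ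
    rwa [← pi_eq_withDensity_prod_rnDeriv hac] at this
  have hpos : ∀ᵐ x ∂Measure.pi μ, ∀ i, ((μ i).rnDeriv (ν i) (x i)).toReal ≠ 0 := by
    refine ae_all_iff.2 fun i => (Measure.quasiMeasurePreserving_eval μ i).ae
      (p := fun y => ((μ i).rnDeriv (ν i) y).toReal ≠ 0) ?_
    filter_upwards [Measure.rnDeriv_pos (hac i),
      (hac i).ae_le (Measure.rnDeriv_lt_top (μ i) (ν i))] with y hy_pos hy_lt_top
    exact (ENNReal.toReal_pos hy_pos.ne' hy_lt_top.ne).ne'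
  filter_upwards [hrn, hpos] with x hx hx_pos
  change log _ = _
  rw [hx, ENNReal.toReal_prod, Real.log_prod fun i _ => hx_pos i]
  rfl

theorem klDiv_pi [∀ i, IsProbabilityMeasure (μ i)] (hac : ∀ i, μ i ≪ ν i)
    (hint : ∀ i, Integrable (llr (μ i) (ν i)) (μ i)) :
    klDiv (Measure.pi μ) (Measure.pi ν) = ENNReal.ofReal (∑ i, ∫ x, llr (μ i) (ν i) x ∂μ i) := by
  have hllr := llr_pi_ae_eq_sum hac
  have hint_pi : Integrable (llr (Measure.pi μ) (Measure.pi ν)) (Measure.pi μ) :=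
    (integrable_finsetSum _ fun i _ => integrable_comp_eval (hint i)).congr hllr.symm
  rw [klDiv, if_pos ⟨pi_absolutelyContinuous_pi hac, hint_pi⟩, integral_congr_ae hllr,
    integral_finsetSum _ fun i _ => integrable_comp_eval (hint i)]
  simp_rw [integral_comp_eval (stronglyMeasurable_llr _ _).aestronglyMeasurable]

end

section Gaussian
open scoped NNReal

lemma integral_sq_gaussianReal (μ : ℝ) (v : ℝ≥0) : ∫ x, x ^ 2 ∂gaussianReal μ v = v + μ ^ 2 := by
  have h := variance_eq_sub (memLp_id_gaussianReal (μ := μ) (v := v) 2)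
  simp only [Pi.pow_apply, id_eq] at h
  rw [variance_id_gaussianReal, integral_id_gaussianReal] at h
  linarith

lemma integral_sub_sq_gaussianReal (μ c : ℝ) (v : ℝ≥0) :
    ∫ x, (x - c) ^ 2 ∂gaussianReal μ v = v + (μ - c) ^ 2 := by
  rw [← integral_sq_gaussianReal, ← gaussianReal_map_sub_const,
    integral_map (by fun_prop) (by fun_prop)]

lemma integrable_sub_sq_gaussianReal (μ c : ℝ) (v : ℝ≥0) :
    Integrable (fun x => (x - c) ^ 2) (gaussianReal μ v) :=
  ((memLp_id_gaussianReal 2).sub (memLp_const c)).integrable_sq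

lemma log_gaussianPDFReal (μ : ℝ) {v : ℝ≥0} (hv : v ≠ 0) (x : ℝ) :
    log (gaussianPDFReal μ v x) = -log (2 * π * v) / 2 - (x - μ) ^ 2 / (2 * v) := by
  have : 0 < 2 * π * v := by positivity
  rw [gaussianPDFReal, log_mul (by positivity) (exp_ne_zero _), log_inv, log_exp,
    log_sqrt this.le]
  ring

lemma gaussianReal_absolutelyContinuous_gaussianReal (μ₁ μ₂ : ℝ) {v₁ v₂ : ℝ≥0} (hv₁ : v₁ ≠ 0)
    (hv₂ : v₂ ≠ 0) : gaussianReal μ₁ v₁ ≪ gaussianReal μ₂ v₂ :=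
  (gaussianReal_absolutelyContinuous μ₁ hv₁).trans (gaussianReal_absolutelyContinuous' μ₂ hv₂)

lemma llr_gaussianReal_ae_eq (μ₁ μ₂ : ℝ) {v₁ v₂ : ℝ≥0} (hv₁ : v₁ ≠ 0) (hv₂ : v₂ ≠ 0) :
    llr (gaussianReal μ₁ v₁) (gaussianReal μ₂ v₂) =ᵐ[gaussianReal μ₁ v₁] fun x =>
      (log (2 * π * v₂) - log (2 * π * v₁)) / 2 - (x - μ₁) ^ 2 / (2 * v₁)
        + (x - μ₂) ^ 2 / (2 * v₂) := by
  have hvol := gaussianReal_absolutelyContinuous μ₁ hv₁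
  filter_upwards [(gaussianReal_absolutelyContinuous_gaussianReal μ₁ μ₂ hv₁ hv₂).ae_le
      (Measure.rnDeriv_eq_div (gaussianReal_absolutelyContinuous μ₁ hv₁)
        (gaussianReal_absolutelyContinuous μ₂ hv₂)),
    hvol.ae_le (rnDeriv_gaussianReal μ₁ v₁), hvol.ae_le (rnDeriv_gaussianReal μ₂ v₂)]
    with x hx h₁ h₂
  change log _ = _
  rw [hx, h₁, h₂, ENNReal.toReal_div, toReal_gaussianPDF, toReal_gaussianPDF,
    log_div (gaussianPDFReal_pos _ _ _ hv₁).ne' (gaussianPDFReal_pos _ _ _ hv₂).ne',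
    log_gaussianPDFReal _ hv₁, log_gaussianPDFReal _ hv₂]
  ring

lemma integrable_llr_gaussianReal (μ₁ μ₂ : ℝ) {v₁ v₂ : ℝ≥0} (hv₁ : v₁ ≠ 0) (hv₂ : v₂ ≠ 0) :
    Integrable (llr (gaussianReal μ₁ v₁) (gaussianReal μ₂ v₂)) (gaussianReal μ₁ v₁) := by
  refine Integrable.congr ?_ (llr_gaussianReal_ae_eq μ₁ μ₂ hv₁ hv₂).symm
  exact ((integrable_const _).sub ((integrable_sub_sq_gaussianReal _ _ _).div_const _)).add
    ((integrable_sub_sq_gaussianReal _ _ _).div_const _)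

lemma integral_llr_gaussianReal (μ₁ μ₂ : ℝ) {v₁ v₂ : ℝ≥0} (hv₁ : v₁ ≠ 0) (hv₂ : v₂ ≠ 0) :
    ∫ x, llr (gaussianReal μ₁ v₁) (gaussianReal μ₂ v₂) x ∂gaussianReal μ₁ v₁
      = ((v₁ + (μ₁ - μ₂) ^ 2) / v₂ - log (v₁ / v₂) - 1) / 2 := by
  set c := (log (2 * π * v₂) - log (2 * π * v₁)) / 2 with hc_def
  have hq₁ := (integrable_sub_sq_gaussianReal μ₁ μ₁ v₁).div_const (2 * v₁)
  have hq₂ := (integrable_sub_sq_gaussianReal μ₁ μ₂ v₁).div_const (2 * v₂)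
  rw [integral_congr_ae (llr_gaussianReal_ae_eq μ₁ μ₂ hv₁ hv₂),
    integral_add (f := fun x => c - (x - μ₁) ^ 2 / (2 * v₁)) ((integrable_const c).sub hq₁) hq₂,
    integral_sub (integrable_const c) hq₁]
  simp only [integral_div, integral_const, integral_sub_sq_gaussianReal]
  have h₁ : (v₁ : ℝ) ≠ 0 := by exact_mod_cast hv₁
  have h₂ : (v₂ : ℝ) ≠ 0 := by exact_mod_cast hv₂
  have hc : c = (log v₂ - log v₁) / 2 := by
    rw [hc_def, log_mul (by positivity) h₂, log_mul (by positivity) h₁]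
    ring
  rw [probReal_univ, one_smul, hc, log_div h₁ h₂]
  field_simp
  ring

end Gaussian

theorem stmt_2_general (k : ℕ) (m n : Fin k → NNReal)
    (hm : ∀ ℓ, 0 < m ℓ) (hn : ∀ ℓ, 0 < n ℓ)
    (U : EuclideanSpace ℝ (Fin k) ≃ₗᵢ[ℝ] EuclideanSpace ℝ (Fin k))
    (P Q : Measure (EuclideanSpace ℝ (Fin k)))
    (hP : P = Measure.map U (Measure.map (MeasurableEquiv.toLp 2 (Fin k → ℝ)) (Measure.pi fun ℓ => gaussianReal 0 (m ℓ))))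
    (hQ : Q = Measure.map U (Measure.map (MeasurableEquiv.toLp 2 (Fin k → ℝ)) (Measure.pi fun ℓ => gaussianReal 0 (n ℓ)))) :
    klDiv P Q = ENNReal.ofReal ((1 / 2) * ∑ ℓ : Fin k,
      ((m ℓ : ℝ) / (n ℓ : ℝ) - Real.log ((m ℓ : ℝ) / (n ℓ : ℝ)) - 1)) := by
  let e := (MeasurableEquiv.toLp 2 (Fin k → ℝ)).trans U.toHomeomorph.toMeasurableEquiv
  have hmap (μ : Measure (Fin k → ℝ)) :
      (μ.map (MeasurableEquiv.toLp 2 (Fin k → ℝ))).map U = μ.map e :=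
    Measure.map_map U.continuous.measurable (MeasurableEquiv.toLp 2 (Fin k → ℝ)).measurable
  have hm₀ ℓ : m ℓ ≠ 0 := (hm ℓ).ne'
  have hn₀ ℓ : n ℓ ≠ 0 := (hn ℓ).ne'
  rw [hP, hQ, hmap, hmap, klDiv_map_measurableEquiv,
    klDiv_pi (fun ℓ => gaussianReal_absolutelyContinuous_gaussianReal 0 0 (hm₀ ℓ) (hn₀ ℓ))
      (fun ℓ => integrable_llr_gaussianReal 0 0 (hm₀ ℓ) (hn₀ ℓ)), Finset.mul_sum]
  congr 1
  refine Finset.sum_congr rfl fun ℓ _ => ?_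
  rw [integral_llr_gaussianReal 0 0 (hm₀ ℓ) (hn₀ ℓ)]
  ring

/-- Closed-form KL divergence between two zero-mean multivariate Gaussians whose
covariance matrices are simultaneously diagonalized by the same orthogonal
transformation `U`, with eigenvalues `(m ℓ)` and `(n ℓ)`. -/
theorem stmt_2 (k : ℕ) (hk : 1 ≤ k) (m n : Fin k → NNReal)
    (hm : ∀ ℓ, 0 < m ℓ) (hn : ∀ ℓ, 0 < n ℓ)
    (U : EuclideanSpace ℝ (Fin k) ≃ₗᵢ[ℝ] EuclideanSpace ℝ (Fin k))
    (P Q : Measure (EuclideanSpace ℝ (Fin k)))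
    (hP : P = Measure.map U (Measure.map (MeasurableEquiv.toLp 2 (Fin k → ℝ)) (Measure.pi fun ℓ => gaussianReal 0 (m ℓ))))
    (hQ : Q = Measure.map U (Measure.map (MeasurableEquiv.toLp 2 (Fin k → ℝ)) (Measure.pi fun ℓ => gaussianReal 0 (n ℓ)))) :
    klDiv P Q = ENNReal.ofReal ((1 / 2) * ∑ ℓ : Fin k,
      ((m ℓ : ℝ) / (n ℓ : ℝ) - Real.log ((m ℓ : ℝ) / (n ℓ : ℝ)) - 1)) :=
  stmt_2_general k m n hm hn U P Q hP hQ
end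

section
/- Let μ > 0 and let α, σ : ℝ → ℝ be three times continuously differentiable on an open interval containing [0,1], with α(t)²·μ + σ(t)² > 0 for all t ∈ [0,1]. Then there exist a constant C > 0 and N₀ ∈ ℕ such that for all N ≥ N₀: every argument α((j−1)/N)·α(j/N)·μ + σ((j−1)/N)·σ(j/N) appearing in S_N(μ) is positive, and | S_N(μ) − Σ_{j=1}^{N} ( F_μ(j/N)·(1/N) + G_μ(j/N)·(1/N²) ) | ≤ C/N². -/
/-!
Write `q(t, u) = α(t - u) α(t) μ + σ(t - u) σ(t)`. The `j`-th summand of `S_N` is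
`log q(t, 1/N) - log q(t, 0)` at `t = j/N`, and `F(t)`, `G(t)` are the first two Taylor
coefficients of `u ↦ log q(t, u)` at `u = 0`. Positivity of `q` on `[0,1] × {0}` spreads, by
compactness, to a strip `[0,1] × [0,δ]`, on which the third `u`-derivative of `log q` is
continuous and hence bounded by some `M`. Taylor's theorem then bounds the error of each summand
by `M/(6N³)`, and summing the `N` errors gives `M/(6N²)`.
-/

open Set Real

theorem abs_le_div_mul_pow_of_hasDerivAt {f f' : ℝ → ℝ} {x M : ℝ} (k : ℕ) (h₀ : f 0 = 0)
    (hf : ∀ u ∈ Icc 0 x, HasDerivAt f (f' u) u) (hf' : ∀ u ∈ Icc 0 x, |f' u| ≤ M * u ^ k) :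
    ∀ u ∈ Icc 0 x, |f u| ≤ M / (k + 1) * u ^ (k + 1) :=
  image_norm_le_of_norm_deriv_right_le_deriv_boundary
    (fun u hu => (hf u hu).continuousAt.continuousWithinAt)
    (fun u hu => (hf u (Ico_subset_Icc_self hu)).hasDerivWithinAt) (by simp [h₀])
    (fun u => ((hasDerivAt_pow (k + 1) u).const_mul _).congr_deriv (by field_simp; push_cast; ring))
    (fun u hu => hf' u (Ico_subset_Icc_self hu))

theorem abs_sub_taylor_two_le {f₀ f₁ f₂ f₃ : ℝ → ℝ} {x M : ℝ}
    (h₀ : ∀ u ∈ Icc 0 x, HasDerivAt f₀ (f₁ u) u) (h₁ : ∀ u ∈ Icc 0 x, HasDerivAt f₁ (f₂ u) u)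
    (h₂ : ∀ u ∈ Icc 0 x, HasDerivAt f₂ (f₃ u) u) (hM : ∀ u ∈ Icc 0 x, |f₃ u| ≤ M) (hx : 0 ≤ x) :
    |f₀ x - (f₀ 0 + f₁ 0 * x + f₂ 0 / 2 * x ^ 2)| ≤ M / 6 * x ^ 3 := by
  have r₂ := abs_le_div_mul_pow_of_hasDerivAt (f := fun u => f₂ u - f₂ 0) (f' := f₃) 0
    (sub_self _) (fun u hu => (h₂ u hu).sub_const _) (fun u hu => by simpa using hM u hu)
  have r₁ := abs_le_div_mul_pow_of_hasDerivAt (f := fun u => f₁ u - f₁ 0 - f₂ 0 * u)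
    (f' := fun u => f₂ u - f₂ 0) 1 (by simp)
    (fun u hu => (((h₁ u hu).sub_const _).sub ((hasDerivAt_id u).const_mul _)).congr_deriv
      (by simp)) (fun u hu => by simpa using r₂ u hu)
  have r₀ := abs_le_div_mul_pow_of_hasDerivAt
    (f := fun u => f₀ u - (f₀ 0 + f₁ 0 * u + f₂ 0 / 2 * u ^ 2))
    (f' := fun u => f₁ u - f₁ 0 - f₂ 0 * u) 2 (by simp)
    (fun u hu => ((h₀ u hu).sub ((((hasDerivAt_id u).const_mul _).const_add _).add
      ((hasDerivAt_pow 2 u).const_mul _))).congr_deriv (by ring))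
    (fun u hu => by norm_num at r₁ ⊢; exact r₁ u hu.1 hu.2)
  convert r₀ x (right_mem_Icc.mpr hx) using 2
  push_cast; ring

/-- `(log ∘ g)'''` in terms of `g` and its first three derivatives. -/
noncomputable def logThirdDeriv (g g₁ g₂ g₃ : ℝ) : ℝ :=
  g₃ / g - 3 * (g₁ * g₂) / g ^ 2 + 2 * (g₁ / g) ^ 3

theorem abs_log_sub_taylor_two_le {g g₁ g₂ g₃ : ℝ → ℝ} {x M : ℝ}
    (h₀ : ∀ u ∈ Icc 0 x, HasDerivAt g (g₁ u) u) (h₁ : ∀ u ∈ Icc 0 x, HasDerivAt g₁ (g₂ u) u)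
    (h₂ : ∀ u ∈ Icc 0 x, HasDerivAt g₂ (g₃ u) u) (hg : ∀ u ∈ Icc 0 x, 0 < g u)
    (hM : ∀ u ∈ Icc 0 x, |logThirdDeriv (g u) (g₁ u) (g₂ u) (g₃ u)| ≤ M) (hx : 0 ≤ x) :
    |log (g x) - (log (g 0) + g₁ 0 / g 0 * x + (g₂ 0 / g 0 - (g₁ 0 / g 0) ^ 2) / 2 * x ^ 2)|
      ≤ M / 6 * x ^ 3 := by
  refine abs_sub_taylor_two_le (f₀ := fun u => log (g u)) (f₁ := fun u => g₁ u / g u)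
    (f₂ := fun u => g₂ u / g u - (g₁ u / g u) ^ 2)
    (fun u hu => (h₀ u hu).log (hg u hu).ne') (fun u hu => ?_) (fun u hu => ?_) hM hx
  · have hne := (hg u hu).ne'
    exact ((h₁ u hu).div (h₀ u hu) hne).congr_deriv (by field_simp)
  · have hne := (hg u hu).ne'
    exact (((h₂ u hu).div (h₀ u hu) hne).sub (((h₁ u hu).div (h₀ u hu) hne).fun_pow 2)).congr_deriv
      (by
        simp only [logThirdDeriv, Pi.div_apply, Nat.add_one_sub_one, pow_one, Nat.cast_ofNat]
        field_simp
        ring)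

theorem ContDiffOn.iterate_deriv_of_isOpen {f : ℝ → ℝ} {s : Set ℝ} {n : WithTop ℕ∞}
    (hs : IsOpen s) : ∀ k : ℕ, ContDiffOn ℝ (n + k) f s → ContDiffOn ℝ n (deriv^[k] f) s
  | 0, hf => by simpa using hf
  | k + 1, hf => iterate_deriv_of_isOpen hs k (hf.deriv_of_isOpen hs (by push_cast; rw [add_assoc]))

theorem ContDiffOn.hasDerivAt_iterate_deriv {f : ℝ → ℝ} {s : Set ℝ} {n k : ℕ}
    (hf : ContDiffOn ℝ n f s) (hs : IsOpen s) (hk : k < n) {y : ℝ} (hy : y ∈ s) :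
    HasDerivAt (deriv^[k] f) (deriv^[k + 1] f y) y := by
  have h : ContDiffOn ℝ (1 + k) f s := hf.of_le (by norm_cast; omega)
  rw [Function.iterate_succ_apply']
  exact (((h.iterate_deriv_of_isOpen hs k).contDiffAt (hs.mem_nhds hy)).differentiableAt
    one_ne_zero).hasDerivAt

theorem ContDiffOn.continuousOn_iterate_deriv {f : ℝ → ℝ} {s : Set ℝ} {n k : ℕ}
    (hf : ContDiffOn ℝ n f s) (hs : IsOpen s) (hk : k ≤ n) :
    ContinuousOn (deriv^[k] f) s :=
  ((hf.of_le (by simpa using hk : (0 : WithTop ℕ∞) + k ≤ n)).iterate_deriv_of_isOpen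
    hs k).continuousOn

theorem IsCompact.exists_prod_Icc_subset {X : Type*} [TopologicalSpace X] {K : Set X}
    (hK : IsCompact K) {W : Set (X × ℝ)} (hW : IsOpen W) (h : K ×ˢ {0} ⊆ W) :
    ∃ δ > 0, K ×ˢ Icc 0 δ ⊆ W := by
  obtain ⟨U, V, -, hV, hKU, h0V, hUV⟩ := generalized_tube_lemma hK isCompact_singleton hW h
  obtain ⟨ε, hε, hball⟩ := Metric.isOpen_iff.mp hV 0 (h0V rfl)
  refine ⟨ε / 2, half_pos hε, (prod_mono hKU fun u hu => hball ?_).trans hUV⟩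
  rw [Metric.mem_ball, Real.dist_0_eq_abs, abs_of_nonneg hu.1]
  linarith [hu.2]

/-- `pairing α σ μ α σ (j/N, 1/N)` is the numerator of the `j`-th summand of `S_N`. -/
def pairing (α σ : ℝ → ℝ) (μ : ℝ) (f g : ℝ → ℝ) (p : ℝ × ℝ) : ℝ :=
  f (p.1 - p.2) * α p.1 * μ + g (p.1 - p.2) * σ p.1

section Pairing

variable {α σ : ℝ → ℝ} {μ : ℝ}

theorem continuousOn_pairing {f g : ℝ → ℝ} {s : Set ℝ} (hα : ContinuousOn α s)
    (hσ : ContinuousOn σ s) (hf : ContinuousOn f s) (hg : ContinuousOn g s) :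
    ContinuousOn (pairing α σ μ f g) {p | p.1 ∈ s ∧ p.1 - p.2 ∈ s} := by
  have h₁ : ContinuousOn Prod.fst {p : ℝ × ℝ | p.1 ∈ s ∧ p.1 - p.2 ∈ s} := continuousOn_fst
  have h₂ : ContinuousOn (fun p : ℝ × ℝ => p.1 - p.2) {p | p.1 ∈ s ∧ p.1 - p.2 ∈ s} :=
    continuousOn_fst.sub continuousOn_snd
  exact (((hf.comp h₂ fun p hp => hp.2).mul (hα.comp h₁ fun p hp => hp.1)).mul
    continuousOn_const).add ((hg.comp h₂ fun p hp => hp.2).mul (hσ.comp h₁ fun p hp => hp.1))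

theorem hasDerivAt_pairing_snd {f g f' g' : ℝ → ℝ} {t u : ℝ}
    (hf : HasDerivAt f (f' (t - u)) (t - u)) (hg : HasDerivAt g (g' (t - u)) (t - u)) :
    HasDerivAt (fun v => pairing α σ μ f g (t, v)) (-pairing α σ μ f' g' (t, u)) u := by
  have hsub : HasDerivAt (fun v => t - v) (-1) u := (hasDerivAt_id u).const_sub t
  have := (((hf.comp u hsub).mul_const (α t)).mul_const μ).add ((hg.comp u hsub).mul_const (σ t))
  exact this.congr_deriv (by simp only [pairing]; ring)

end Pairing

theorem ContinuousOn.logThirdDeriv {X : Type*} [TopologicalSpace X] {S : Set X}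
    {g g₁ g₂ g₃ : X → ℝ} (hg : ContinuousOn g S) (hg₁ : ContinuousOn g₁ S)
    (hg₂ : ContinuousOn g₂ S) (hg₃ : ContinuousOn g₃ S) (hne : ∀ p ∈ S, g p ≠ 0) :
    ContinuousOn (fun p => logThirdDeriv (g p) (g₁ p) (g₂ p) (g₃ p)) S := by
  unfold _root_.logThirdDeriv
  exact ((hg₃.div hg hne).sub ((continuousOn_const.mul (hg₁.mul hg₂)).div (hg.pow 2)
    fun p hp => pow_ne_zero 2 (hne p hp))).add (continuousOn_const.mul ((hg₁.div hg hne).pow 3))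

section Expansion

variable {α σ : ℝ → ℝ} {μ : ℝ} {s : Set ℝ}

theorem exists_pairing_pos_and_logThirdDeriv_bound (hs : IsOpen s) (hsub : Icc 0 1 ⊆ s)
    (hα : ContDiffOn ℝ 3 α s) (hσ : ContDiffOn ℝ 3 σ s)
    (hpos : ∀ t ∈ Icc (0 : ℝ) 1, 0 < α t ^ 2 * μ + σ t ^ 2) :
    ∃ δ > 0, ∃ M, ∀ p ∈ Icc (0 : ℝ) 1 ×ˢ Icc 0 δ, p.1 - p.2 ∈ s ∧ 0 < pairing α σ μ α σ p ∧
      |logThirdDeriv (pairing α σ μ α σ p) (-pairing α σ μ (deriv^[1] α) (deriv^[1] σ) p)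
        (pairing α σ μ (deriv^[2] α) (deriv^[2] σ) p)
        (-pairing α σ μ (deriv^[3] α) (deriv^[3] σ) p)| ≤ M := by
  set U := {p : ℝ × ℝ | p.1 ∈ s ∧ p.1 - p.2 ∈ s}
  have hU : IsOpen U :=
    (hs.preimage continuous_fst).inter (hs.preimage (continuous_fst.sub continuous_snd))
  have hcont : ∀ k ≤ 3, ContinuousOn (pairing α σ μ (deriv^[k] α) (deriv^[k] σ)) U :=
    fun k hk => continuousOn_pairing hα.continuousOn hσ.continuousOn
      (hα.continuousOn_iterate_deriv hs hk) (hσ.continuousOn_iterate_deriv hs hk)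
  have hW : IsOpen (U ∩ pairing α σ μ α σ ⁻¹' Ioi 0) :=
    (hcont 0 (by norm_num)).isOpen_inter_preimage hU isOpen_Ioi
  have h₀ : Icc 0 1 ×ˢ {0} ⊆ U ∩ pairing α σ μ α σ ⁻¹' Ioi 0 := by
    rintro ⟨t, _⟩ ⟨ht, rfl⟩
    exact ⟨⟨hsub ht, by simpa using hsub ht⟩, by simpa [pairing, sq] using hpos t ht⟩
  obtain ⟨δ, hδ, hK⟩ := isCompact_Icc.exists_prod_Icc_subset hW h₀
  have hΨ := ContinuousOn.logThirdDeriv ((hcont 0 (by norm_num)).mono fun p hp => (hK hp).1)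
    ((hcont 1 (by norm_num)).neg.mono fun p hp => (hK hp).1)
    ((hcont 2 (by norm_num)).mono fun p hp => (hK hp).1)
    ((hcont 3 le_rfl).neg.mono fun p hp => (hK hp).1) fun p hp => (hK hp).2.ne'
  obtain ⟨M, hM⟩ := (isCompact_Icc.prod isCompact_Icc).exists_bound_of_continuousOn hΨ
  exact ⟨δ, hδ, M, fun p hp => ⟨(hK hp).1.2, (hK hp).2, hM p hp⟩⟩

theorem abs_log_pairing_sub_taylor_le (hs : IsOpen s) (hα : ContDiffOn ℝ 3 α s)
    (hσ : ContDiffOn ℝ 3 σ s) {t x M : ℝ} (hx : 0 ≤ x)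
    (h : ∀ u ∈ Icc 0 x, t - u ∈ s ∧ 0 < pairing α σ μ α σ (t, u) ∧
      |logThirdDeriv (pairing α σ μ α σ (t, u)) (-pairing α σ μ (deriv^[1] α) (deriv^[1] σ) (t, u))
        (pairing α σ μ (deriv^[2] α) (deriv^[2] σ) (t, u))
        (-pairing α σ μ (deriv^[3] α) (deriv^[3] σ) (t, u))| ≤ M) :
    |log (pairing α σ μ α σ (t, x)) - (log (pairing α σ μ α σ (t, 0))
      + -pairing α σ μ (deriv α) (deriv σ) (t, 0) / pairing α σ μ α σ (t, 0) * x
      + (pairing α σ μ (deriv (deriv α)) (deriv (deriv σ)) (t, 0) / pairing α σ μ α σ (t, 0)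
        - (-pairing α σ μ (deriv α) (deriv σ) (t, 0) / pairing α σ μ α σ (t, 0)) ^ 2) / 2 * x ^ 2)|
      ≤ M / 6 * x ^ 3 := by
  have hd : ∀ k < 3, ∀ u ∈ Icc 0 x, HasDerivAt
      (fun v => pairing α σ μ (deriv^[k] α) (deriv^[k] σ) (t, v))
      (-pairing α σ μ (deriv^[k + 1] α) (deriv^[k + 1] σ) (t, u)) u := fun k hk u hu =>
    hasDerivAt_pairing_snd (hα.hasDerivAt_iterate_deriv hs hk (h u hu).1)
      (hσ.hasDerivAt_iterate_deriv hs hk (h u hu).1)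
  exact abs_log_sub_taylor_two_le (g₂ := fun v => pairing α σ μ (deriv^[2] α) (deriv^[2] σ) (t, v))
    (hd 0 (by norm_num)) (fun u hu => (hd 1 (by norm_num) u hu).neg.congr_deriv (neg_neg _))
    (hd 2 (by norm_num)) (fun u hu => (h u hu).2.1) (fun u hu => (h u hu).2.2) hx

theorem exists_log_ratio_expansion (hs : IsOpen s) (hsub : Icc 0 1 ⊆ s)
    (hα : ContDiffOn ℝ 3 α s) (hσ : ContDiffOn ℝ 3 σ s)
    (hpos : ∀ t ∈ Icc (0 : ℝ) 1, 0 < α t ^ 2 * μ + σ t ^ 2) (F G : ℝ → ℝ)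
    (hF : ∀ t, F t = -(α t * deriv α t * μ + σ t * deriv σ t) / (α t ^ 2 * μ + σ t ^ 2))
    (hG : ∀ t, G t = (α t * deriv (deriv α) t * μ + σ t * deriv (deriv σ) t)
          / (2 * (α t ^ 2 * μ + σ t ^ 2))
        - (α t * deriv α t * μ + σ t * deriv σ t) ^ 2 / (2 * (α t ^ 2 * μ + σ t ^ 2) ^ 2)) :
    ∃ δ > 0, ∃ M, ∀ t ∈ Icc (0 : ℝ) 1, ∀ x ∈ Icc 0 δ,
      0 < α (t - x) * α t * μ + σ (t - x) * σ t ∧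
      |log ((α (t - x) * α t * μ + σ (t - x) * σ t) / (α t ^ 2 * μ + σ t ^ 2))
        - (F t * x + G t * x ^ 2)| ≤ M * x ^ 3 := by
  obtain ⟨δ, hδ, M, hK⟩ := exists_pairing_pos_and_logThirdDeriv_bound hs hsub hα hσ hpos
  refine ⟨δ, hδ, M / 6, fun t ht x hx => ?_⟩
  have hmem : ∀ u ∈ Icc 0 x, (t, u) ∈ Icc (0 : ℝ) 1 ×ˢ Icc 0 δ :=
    fun u hu => ⟨ht, hu.1, hu.2.trans hx.2⟩
  have hx₀ := (hK _ (hmem x (right_mem_Icc.mpr hx.1))).2.1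
  have h₀ : α t ^ 2 * μ + σ t ^ 2 = pairing α σ μ α σ (t, 0) := by
    simp only [pairing, sub_zero]; ring
  have key := abs_log_pairing_sub_taylor_le hs hα hσ hx.1 fun u hu => hK _ (hmem u hu)
  refine ⟨hx₀, ?_⟩
  rw [show α (t - x) * α t * μ + σ (t - x) * σ t = pairing α σ μ α σ (t, x) from rfl, hF, hG, h₀,
    log_div hx₀.ne' (h₀ ▸ (hpos t ht).ne')]
  set P := pairing α σ μ α σ (t, 0)
  convert key using 2
  simp only [pairing, sub_zero]
  ring

end Expansion

theorem abs_sum_Icc_sub_sum_le {N : ℕ} {a b : ℕ → ℝ} {M : ℝ}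
    (h : ∀ j ∈ Finset.Icc 1 N, |a j - b j| ≤ M / N ^ 3) :
    |∑ j ∈ Finset.Icc 1 N, a j - ∑ j ∈ Finset.Icc 1 N, b j| ≤ M / N ^ 2 := by
  rw [← Finset.sum_sub_distrib]
  refine (Finset.abs_sum_le_sum_abs _ _).trans ((Finset.sum_le_sum h).trans_eq ?_)
  rcases N.eq_zero_or_pos with rfl | hN
  · simp
  · rw [Finset.sum_const, Nat.card_Icc, nsmul_eq_mul]
    field_simp
    push_cast
    ring

theorem stmt_3_general (μ : ℝ) (α σ : ℝ → ℝ) (s : Set ℝ) (hs : IsOpen s)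
    (hsub : Set.Icc (0 : ℝ) 1 ⊆ s)
    (hα : ContDiffOn ℝ 3 α s) (hσ : ContDiffOn ℝ 3 σ s)
    (hpos : ∀ t ∈ Set.Icc (0 : ℝ) 1, 0 < (α t) ^ 2 * μ + (σ t) ^ 2)
    (S : ℕ → ℝ)
    (hS : ∀ N : ℕ, S N = ∑ j ∈ Finset.Icc 1 N,
      Real.log ((α (((j : ℝ) - 1) / (N : ℝ)) * α ((j : ℝ) / (N : ℝ)) * μ
          + σ (((j : ℝ) - 1) / (N : ℝ)) * σ ((j : ℝ) / (N : ℝ)))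
        / ((α ((j : ℝ) / (N : ℝ))) ^ 2 * μ + (σ ((j : ℝ) / (N : ℝ))) ^ 2)))
    (F G : ℝ → ℝ)
    (hF : ∀ t, F t = -(α t * deriv α t * μ + σ t * deriv σ t)
        / ((α t) ^ 2 * μ + (σ t) ^ 2))
    (hG : ∀ t, G t = (α t * deriv (deriv α) t * μ + σ t * deriv (deriv σ) t)
          / (2 * ((α t) ^ 2 * μ + (σ t) ^ 2))
        - (α t * deriv α t * μ + σ t * deriv σ t) ^ 2
          / (2 * ((α t) ^ 2 * μ + (σ t) ^ 2) ^ 2)) :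
    ∃ C > 0, ∃ N₀ : ℕ, ∀ N ≥ N₀,
      (∀ j ∈ Finset.Icc 1 N,
        0 < α (((j : ℝ) - 1) / (N : ℝ)) * α ((j : ℝ) / (N : ℝ)) * μ
          + σ (((j : ℝ) - 1) / (N : ℝ)) * σ ((j : ℝ) / (N : ℝ))) ∧
      |S N - ∑ j ∈ Finset.Icc 1 N,
          (F ((j : ℝ) / (N : ℝ)) * (1 / (N : ℝ)) + G ((j : ℝ) / (N : ℝ)) * (1 / (N : ℝ) ^ 2))|
        ≤ C / (N : ℝ) ^ 2 := by
  obtain ⟨δ, hδ, M, hloc⟩ := exists_log_ratio_expansion hs hsub hα hσ hpos F G hF hG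
  obtain ⟨n, hn⟩ := exists_nat_one_div_lt hδ
  refine ⟨|M| + 1, by positivity, n + 1, fun N hN => ?_⟩
  have hN₀ : (0 : ℝ) < N := by norm_cast; omega
  have hx : 1 / (N : ℝ) ∈ Icc 0 δ := ⟨by positivity,
    (one_div_le_one_div_of_le (by positivity : (0 : ℝ) < n + 1) (by exact_mod_cast hN)).trans hn.le⟩
  have ht : ∀ j ∈ Finset.Icc 1 N, (j / N : ℝ) ∈ Icc 0 1 := fun j hj =>
    ⟨by positivity, div_le_one_of_le₀ (by exact_mod_cast (Finset.mem_Icc.mp hj).2) hN₀.le⟩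
  have hstep := fun j hj => hloc _ (ht j hj) _ hx
  simp only [div_sub_div_same, one_div_pow] at hstep
  refine ⟨fun j hj => (hstep j hj).1, ?_⟩
  rw [hS]
  calc _ ≤ M / N ^ 2 := abs_sum_Icc_sub_sum_le fun j hj => (hstep j hj).2.trans_eq (mul_one_div _ _)
    _ ≤ (|M| + 1) / N ^ 2 := by gcongr; linarith [le_abs_self M]

/-- Taylor/Euler–Maclaurin-type expansion of the discretized reverse-sampling
log-variance sum `S_N(μ)` to second order, with uniform `O(1/N²)` error. -/
theorem stmt_3 (μ : ℝ) (hμ : 0 < μ) (α σ : ℝ → ℝ) (s : Set ℝ) (hs : IsOpen s)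
    (hsub : Set.Icc (0 : ℝ) 1 ⊆ s)
    (hα : ContDiffOn ℝ 3 α s) (hσ : ContDiffOn ℝ 3 σ s)
    (hpos : ∀ t ∈ Set.Icc (0 : ℝ) 1, 0 < (α t) ^ 2 * μ + (σ t) ^ 2)
    (S : ℕ → ℝ)
    (hS : ∀ N : ℕ, S N = ∑ j ∈ Finset.Icc 1 N,
      Real.log ((α (((j : ℝ) - 1) / (N : ℝ)) * α ((j : ℝ) / (N : ℝ)) * μ
          + σ (((j : ℝ) - 1) / (N : ℝ)) * σ ((j : ℝ) / (N : ℝ)))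
        / ((α ((j : ℝ) / (N : ℝ))) ^ 2 * μ + (σ ((j : ℝ) / (N : ℝ))) ^ 2)))
    (F G : ℝ → ℝ)
    (hF : ∀ t, F t = -(α t * deriv α t * μ + σ t * deriv σ t)
        / ((α t) ^ 2 * μ + (σ t) ^ 2))
    (hG : ∀ t, G t = (α t * deriv (deriv α) t * μ + σ t * deriv (deriv σ) t)
          / (2 * ((α t) ^ 2 * μ + (σ t) ^ 2))
        - (α t * deriv α t * μ + σ t * deriv σ t) ^ 2
          / (2 * ((α t) ^ 2 * μ + (σ t) ^ 2) ^ 2)) :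
    ∃ C > 0, ∃ N₀ : ℕ, ∀ N ≥ N₀,
      (∀ j ∈ Finset.Icc 1 N,
        0 < α (((j : ℝ) - 1) / (N : ℝ)) * α ((j : ℝ) / (N : ℝ)) * μ
          + σ (((j : ℝ) - 1) / (N : ℝ)) * σ ((j : ℝ) / (N : ℝ))) ∧
      |S N - ∑ j ∈ Finset.Icc 1 N,
          (F ((j : ℝ) / (N : ℝ)) * (1 / (N : ℝ)) + G ((j : ℝ) / (N : ℝ)) * (1 / (N : ℝ) ^ 2))|
        ≤ C / (N : ℝ) ^ 2 :=
  stmt_3_general μ α σ s hs hsub hα hσ hpos S hS F G hF hG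
end

section
/- Let μ > 0 and let α, σ : ℝ → ℝ be twice continuously differentiable on an open interval containing [0,1], with α(t)²·μ + σ(t)² > 0 for all t ∈ [0,1]. Then (1/2)·( F_μ(1) − F_μ(0) ) + ∫₀¹ G_μ(t) dt = −(μ/2) · ∫₀¹ (α(t)·σ'(t) − σ(t)·α'(t))² / (α(t)²·μ + σ(t)²)² dt. In particular the left-hand side is always ≤ 0. -/
/-!
With `D = α²μ + σ²` we have `F_μ = -D'/(2D)`, so `F_μ' = -(D''D - D'²)/(2D²)`.
Comparing with `G_μ`, `-F_μ' - 2 G_μ = ((α'²μ + σ'²)(α²μ + σ²) - (αα'μ + σσ')²)/D²`,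
and by Lagrange's identity the numerator is `μ (ασ' - σα')²`. Integrating
`F_μ' = -(2 G_μ + μ (ασ' - σα')²/D²)` over `[0, 1]` gives the identity,
whose right-hand side is visibly `≤ 0`.
-/

open Set intervalIntegral

namespace EulerMaclaurinCoeff

variable (μ : ℝ) (α σ : ℝ → ℝ)

noncomputable def weightedNormSq (t : ℝ) : ℝ := α t ^ 2 * μ + σ t ^ 2

noncomputable def F (t : ℝ) : ℝ :=
  -(α t * deriv α t * μ + σ t * deriv σ t) / weightedNormSq μ α σ t

noncomputable def G (t : ℝ) : ℝ :=
  (α t * deriv (deriv α) t * μ + σ t * deriv (deriv σ) t) / (2 * weightedNormSq μ α σ t)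
    - (α t * deriv α t * μ + σ t * deriv σ t) ^ 2 / (2 * weightedNormSq μ α σ t ^ 2)

noncomputable def wronskianSqDiv (t : ℝ) : ℝ :=
  (α t * deriv σ t - σ t * deriv α t) ^ 2 / weightedNormSq μ α σ t ^ 2

variable {μ α σ}

theorem hasDerivAt_F {t : ℝ} (hα : DifferentiableAt ℝ α t)
    (hα' : DifferentiableAt ℝ (deriv α) t)
    (hσ : DifferentiableAt ℝ σ t) (hσ' : DifferentiableAt ℝ (deriv σ) t)
    (hD : weightedNormSq μ α σ t ≠ 0) :
    HasDerivAt (F μ α σ) (-(2 * G μ α σ t + μ * wronskianSqDiv μ α σ t)) t := by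
  have hN : HasDerivAt (fun u => -(α u * deriv α u * μ + σ u * deriv σ u))
      (-((deriv α t * deriv α t + α t * deriv (deriv α) t) * μ
        + (deriv σ t * deriv σ t + σ t * deriv (deriv σ) t))) t :=
    (((hα.hasDerivAt.mul hα'.hasDerivAt).mul_const μ).add
      (hσ.hasDerivAt.mul hσ'.hasDerivAt)).neg
  have hD' : HasDerivAt (weightedNormSq μ α σ)
      (2 * α t * deriv α t * μ + 2 * σ t * deriv σ t) t := by
    unfold weightedNormSq
    simpa using ((hα.hasDerivAt.fun_pow 2).mul_const μ).fun_add (hσ.hasDerivAt.fun_pow 2)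
  refine (hN.fun_div hD' hD).congr_deriv ?_
  unfold G wronskianSqDiv
  unfold weightedNormSq at hD ⊢
  field_simp
  ring

theorem continuousOn_G {K : Set ℝ} (hα : ContinuousOn α K) (hα' : ContinuousOn (deriv α) K)
    (hα'' : ContinuousOn (deriv (deriv α)) K) (hσ : ContinuousOn σ K)
    (hσ' : ContinuousOn (deriv σ) K) (hσ'' : ContinuousOn (deriv (deriv σ)) K)
    (hD : ∀ t ∈ K, weightedNormSq μ α σ t ≠ 0) : ContinuousOn (G μ α σ) K := by
  unfold G weightedNormSq at *
  fun_prop (disch := simp_all)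

theorem continuousOn_wronskianSqDiv {K : Set ℝ} (hα : ContinuousOn α K)
    (hα' : ContinuousOn (deriv α) K) (hσ : ContinuousOn σ K) (hσ' : ContinuousOn (deriv σ) K)
    (hD : ∀ t ∈ K, weightedNormSq μ α σ t ≠ 0) :
    ContinuousOn (wronskianSqDiv μ α σ) K := by
  unfold wronskianSqDiv weightedNormSq at *
  fun_prop (disch := simp_all)

theorem half_sub_add_integral_G {a b : ℝ} {s : Set ℝ} (hs : IsOpen s) (hab : uIcc a b ⊆ s)
    (hα : ContDiffOn ℝ 2 α s) (hσ : ContDiffOn ℝ 2 σ s)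
    (hD : ∀ t ∈ uIcc a b, weightedNormSq μ α σ t ≠ 0) :
    (1 / 2) * (F μ α σ b - F μ α σ a) + ∫ t in a..b, G μ α σ t
      = -(μ / 2) * ∫ t in a..b, wronskianSqDiv μ α σ t := by
  have hα' : ContDiffOn ℝ 1 (deriv α) s := hα.deriv_of_isOpen hs le_rfl
  have hσ' : ContDiffOn ℝ 1 (deriv σ) s := hσ.deriv_of_isOpen hs le_rfl
  have hdiff {f : ℝ → ℝ} {n : WithTop ℕ∞} (hf : ContDiffOn ℝ n f s) (hn : n ≠ 0) {t : ℝ}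
      (ht : t ∈ uIcc a b) : DifferentiableAt ℝ f t :=
    (hf.differentiableOn hn).differentiableAt (hs.mem_nhds (hab ht))
  have hG : IntervalIntegrable (G μ α σ) MeasureTheory.volume a b :=
    (continuousOn_G (hα.continuousOn.mono hab) (hα'.continuousOn.mono hab)
      ((hα'.continuousOn_deriv_of_isOpen hs le_rfl).mono hab) (hσ.continuousOn.mono hab)
      (hσ'.continuousOn.mono hab) ((hσ'.continuousOn_deriv_of_isOpen hs le_rfl).mono hab)
      hD).intervalIntegrable
  have hq : IntervalIntegrable (wronskianSqDiv μ α σ) MeasureTheory.volume a b :=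
    (continuousOn_wronskianSqDiv (hα.continuousOn.mono hab) (hα'.continuousOn.mono hab)
      (hσ.continuousOn.mono hab) (hσ'.continuousOn.mono hab) hD).intervalIntegrable
  have hFTC := integral_eq_sub_of_hasDerivAt
    (fun t ht => hasDerivAt_F (hdiff hα two_ne_zero ht) (hdiff hα' one_ne_zero ht)
      (hdiff hσ two_ne_zero ht) (hdiff hσ' one_ne_zero ht) (hD t ht))
    ((hG.const_mul 2).add (hq.const_mul μ)).neg
  rw [integral_neg, integral_add (hG.const_mul 2) (hq.const_mul μ), integral_const_mul,
    integral_const_mul] at hFTC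
  linarith

theorem integral_wronskianSqDiv_nonneg {a b : ℝ} (hab : a ≤ b) :
    0 ≤ ∫ t in a..b, wronskianSqDiv μ α σ t :=
  integral_nonneg hab fun _ _ => by unfold wronskianSqDiv; positivity

end EulerMaclaurinCoeff

/-- The leading-order Euler–Maclaurin coefficient
`(1/2)(F_μ(1) − F_μ(0)) + ∫₀¹ G_μ` equals
`−(μ/2)·∫₀¹ (α σ' − σ α')²/(α²μ + σ²)² dt`; in particular it is `≤ 0`. -/
theorem stmt_5 (μ : ℝ) (hμ : 0 < μ) (α σ : ℝ → ℝ) (s : Set ℝ) (hs : IsOpen s)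
    (hsub : Set.Icc (0 : ℝ) 1 ⊆ s)
    (hα : ContDiffOn ℝ 2 α s) (hσ : ContDiffOn ℝ 2 σ s)
    (hpos : ∀ t ∈ Set.Icc (0 : ℝ) 1, 0 < (α t) ^ 2 * μ + (σ t) ^ 2)
    (F G : ℝ → ℝ)
    (hF : ∀ t, F t = -(α t * deriv α t * μ + σ t * deriv σ t)
        / ((α t) ^ 2 * μ + (σ t) ^ 2))
    (hG : ∀ t, G t = (α t * deriv (deriv α) t * μ + σ t * deriv (deriv σ) t)
          / (2 * ((α t) ^ 2 * μ + (σ t) ^ 2))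
        - (α t * deriv α t * μ + σ t * deriv σ t) ^ 2
          / (2 * ((α t) ^ 2 * μ + (σ t) ^ 2) ^ 2)) :
    (1 / 2) * (F 1 - F 0) + ∫ t in (0 : ℝ)..1, G t
      = -(μ / 2) * ∫ t in (0 : ℝ)..1,
          (α t * deriv σ t - σ t * deriv α t) ^ 2 / ((α t) ^ 2 * μ + (σ t) ^ 2) ^ 2
    ∧ (1 / 2) * (F 1 - F 0) + (∫ t in (0 : ℝ)..1, G t) ≤ 0 := by
  obtain rfl : F = EulerMaclaurinCoeff.F μ α σ := funext hF
  obtain rfl : G = EulerMaclaurinCoeff.G μ α σ := funext hG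
  have key := EulerMaclaurinCoeff.half_sub_add_integral_G hs (by rwa [uIcc_of_le zero_le_one]) hα hσ
    (fun t ht => (hpos t (by rwa [uIcc_of_le zero_le_one] at ht)).ne')
  refine ⟨key, key ▸ ?_⟩
  exact mul_nonpos_of_nonpos_of_nonneg (by linarith)
    (EulerMaclaurinCoeff.integral_wronskianSqDiv_nonneg zero_le_one)
end

section
/- Let μ > 0 and let α, σ : ℝ → ℝ be three times continuously differentiable on an open interval containing [0,1], with α(t)²·μ + σ(t)² > 0 for all t ∈ [0,1]. Define I(μ) = (1/2)·log( (α(0)²·μ + σ(0)²) / (α(1)²·μ + σ(1)²) ) and E¹(μ) = −(μ/2)·∫₀¹ (α(t)·σ'(t) − σ(t)·α'(t))² / (α(t)²·μ + σ(t)²)² dt. Then there exist a constant C > 0 and N₀ ∈ ℕ such that for all N ≥ N₀, | S_N(μ) − I(μ) − E¹(μ)/N | ≤ C/N². -/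
/-!
Write `g = α² μ + σ²`, `x = j / N` and `y = (j - 1) / N`. Lagrange's identity
`(α y α x μ + σ y σ x)² + μ (α y σ x - σ y α x)² = g y * g x` splits the `j`-th summand of `S_N`
into `(log g y - log g x) / 2`, which telescopes to `I(μ)`, and `log (1 - w) / 2` with
`w = μ (α y σ x - σ y α x)² / (g y * g x) = O(N⁻²)`. First-order Taylor expansions of `α` and `σ`
at `x` give `log (1 - w) / 2 = -N⁻² ψ x + O(N⁻³)` uniformly in `x`, where
`ψ = (μ / 2) (α σ' - σ α')² / g²`, and the Riemann sum `N⁻¹ ∑ ψ (j / N)` is `∫₀¹ ψ + O(N⁻¹)`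
because `ψ` is Lipschitz.

An estimate in a step `h` that is uniform in a base point `x` ranging over a compact set `K` is
stated as `=O[𝓝 0 ×ˢ 𝓟 K]` for functions of `p = (h, x)`.
-/

open Set Filter Topology Asymptotics Metric

lemma ContDiffOn.exists_lipschitzOnWith_of_isCompact_subset {U C : Set ℝ} {f : ℝ → ℝ}
    (hf : ContDiffOn ℝ 1 f U) (hU : IsOpen U) (hC : IsCompact C) (hCU : C ⊆ U) :
    ∃ L, LipschitzOnWith L f C := by
  refine LocallyLipschitzOn.exists_lipschitzOnWith_of_compact hC fun x hx => ?_
  obtain ⟨L, t, ht, hL⟩ := (hf.contDiffAt (hU.mem_nhds (hCU hx))).exists_lipschitzOnWith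
  exact ⟨L, t, mem_nhdsWithin_of_mem_nhds ht, hL⟩

lemma isBigO_one_comp_of_continuousOn {X : Type*} {l : Filter X} {f : ℝ → ℝ} {C : Set ℝ}
    (hC : IsCompact C) (hf : ContinuousOn f C) {φ : X → ℝ} (hφ : ∀ᶠ p in l, φ p ∈ C) :
    (fun p => f (φ p)) =O[l] (fun _ => (1 : ℝ)) := by
  obtain ⟨M, hM⟩ := hC.exists_bound_of_continuousOn hf
  exact IsBigO.of_bound M (hφ.mono fun p hp => by simpa using hM _ hp)

lemma isBigO_log_one_sub_add_self {X : Type*} {l : Filter X} {w : X → ℝ}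
    (hw : Tendsto w l (𝓝 0)) :
    (fun p => Real.log (1 - w p) + w p) =O[l] (fun p => w p ^ 2) := by
  refine IsBigO.of_bound 2 ?_
  filter_upwards [hw.eventually (closedBall_mem_nhds (0 : ℝ) one_half_pos)] with p hp
  rw [Real.dist_0_eq_abs] at hp
  have h := Real.abs_log_sub_add_sum_range_le (x := w p) (by linarith) 1
  simp only [Finset.range_one, Finset.sum_singleton, zero_add, pow_one, Nat.cast_zero,
    div_one] at h
  rw [Real.norm_eq_abs, Real.norm_eq_abs, abs_pow, add_comm]
  calc _ ≤ |w p| ^ 2 / (1 - |w p|) := h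
    _ ≤ 2 * |w p| ^ 2 := by
      rw [div_le_iff₀ (by linarith)]
      nlinarith [sq_nonneg (w p)]

lemma isBigO_fst_pow_pow {β : Type*} (l : Filter β) {m n : ℕ} (hmn : m ≤ n) :
    (fun p : ℝ × β => p.1 ^ n) =O[𝓝 0 ×ˢ l] (fun p => p.1 ^ m) := by
  refine IsBigO.of_bound 1 ?_
  filter_upwards [tendsto_fst.eventually (closedBall_mem_nhds (0 : ℝ) one_pos)] with p hp
  rw [Real.dist_0_eq_abs] at hp
  simpa [abs_pow] using pow_le_pow_of_le_one (abs_nonneg p.1) hp hmn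

lemma exists_bound_of_isBigO_fst_pow {K : Set ℝ} {f : ℝ × ℝ → ℝ} {n : ℕ}
    (hf : f =O[𝓝 0 ×ˢ 𝓟 K] (fun p => p.1 ^ n)) :
    ∃ C > 0, ∃ ε > 0, ∀ h, |h| < ε → ∀ x ∈ K, |f (h, x)| ≤ C * |h| ^ n := by
  obtain ⟨C, hC, hCf⟩ := hf.exists_pos
  obtain ⟨ε, hε, hεf⟩ := Metric.eventually_nhds_iff.1 (eventually_prod_principal_iff.1 hCf.bound)
  exact ⟨C, hC, ε, hε, fun h hh x hx => by
    simpa [abs_pow] using hεf (by simpa [Real.dist_0_eq_abs] using hh) x hx⟩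

section UniformExpansion

variable {U K : Set ℝ} {f : ℝ → ℝ}

lemma add_mem_closedBall_abs (x h : ℝ) : x + h ∈ closedBall x |h| := by simp

lemma eventually_closedBall_subset_cthickening (K : Set ℝ) {δ : ℝ} (hδ : 0 < δ) :
    ∀ᶠ p in 𝓝 (0 : ℝ) ×ˢ 𝓟 K, closedBall p.2 |p.1| ⊆ cthickening δ K := by
  rw [eventually_prod_principal_iff]
  filter_upwards [closedBall_mem_nhds (0 : ℝ) hδ] with h hh x hx
  refine (closedBall_subset_closedBall ?_).trans (closedBall_subset_cthickening hx δ)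
  simpa using hh

lemma eventually_snd_mem (K : Set ℝ) : ∀ᶠ p in 𝓝 (0 : ℝ) ×ˢ 𝓟 K, p.2 ∈ K :=
  eventually_prod_principal_iff.2 (Eventually.of_forall fun _ _ hy => hy)

lemma eventually_add_mem (hU : IsOpen U) (hK : IsCompact K) (hKU : K ⊆ U) :
    ∀ᶠ p in 𝓝 (0 : ℝ) ×ˢ 𝓟 K, p.2 + p.1 ∈ U := by
  obtain ⟨δ, hδ, hδU⟩ := hK.exists_cthickening_subset_open hU hKU
  exact (eventually_closedBall_subset_cthickening K hδ).mono fun p hp =>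
    hδU (hp (add_mem_closedBall_abs _ _))

lemma ContinuousOn.isBigO_one_comp_snd (hf : ContinuousOn f K) (hK : IsCompact K) :
    (fun p : ℝ × ℝ => f p.2) =O[𝓝 0 ×ˢ 𝓟 K] (fun _ => (1 : ℝ)) :=
  isBigO_one_comp_of_continuousOn hK hf (eventually_snd_mem K)

lemma ContinuousOn.isBigO_one_comp_add (hf : ContinuousOn f U) (hU : IsOpen U)
    (hK : IsCompact K) (hKU : K ⊆ U) :
    (fun p : ℝ × ℝ => f (p.2 + p.1)) =O[𝓝 0 ×ˢ 𝓟 K] (fun _ => (1 : ℝ)) := by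
  obtain ⟨δ, hδ, hδU⟩ := hK.exists_cthickening_subset_open hU hKU
  exact isBigO_one_comp_of_continuousOn hK.cthickening (hf.mono hδU)
    ((eventually_closedBall_subset_cthickening K hδ).mono fun p hp =>
      hp (add_mem_closedBall_abs _ _))

lemma ContDiffOn.isBigO_comp_add_sub (hf : ContDiffOn ℝ 1 f U) (hU : IsOpen U)
    (hK : IsCompact K) (hKU : K ⊆ U) :
    (fun p : ℝ × ℝ => f (p.2 + p.1) - f p.2) =O[𝓝 0 ×ˢ 𝓟 K] (fun p => p.1) := by
  obtain ⟨δ, hδ, hδU⟩ := hK.exists_cthickening_subset_open hU hKU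
  obtain ⟨L, hL⟩ := hf.exists_lipschitzOnWith_of_isCompact_subset hU hK.cthickening hδU
  refine IsBigO.of_bound L ?_
  filter_upwards [eventually_closedBall_subset_cthickening K hδ] with p hball
  simpa using hL.norm_sub_le (hball (add_mem_closedBall_abs _ _))
    (hball (mem_closedBall_self (abs_nonneg _)))

lemma ContDiffOn.isBigO_taylor (hf : ContDiffOn ℝ 2 f U) (hU : IsOpen U) (hK : IsCompact K)
    (hKU : K ⊆ U) :
    (fun p : ℝ × ℝ => f (p.2 + p.1) - f p.2 - p.1 * deriv f p.2)
      =O[𝓝 0 ×ˢ 𝓟 K] (fun p => p.1 ^ 2) := by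
  obtain ⟨δ, hδ, hδU⟩ := hK.exists_cthickening_subset_open hU hKU
  obtain ⟨L, hL⟩ := (hf.deriv_of_isOpen hU (by norm_num)).exists_lipschitzOnWith_of_isCompact_subset
    hU hK.cthickening hδU
  refine IsBigO.of_bound L ?_
  filter_upwards [eventually_closedBall_subset_cthickening K hδ] with ⟨h, x⟩ hball
  have hx : x ∈ closedBall x |h| := mem_closedBall_self (abs_nonneg h)
  have hderiv : ∀ z ∈ closedBall x |h|, HasDerivWithinAt (fun z => f z - z * deriv f x)
      (deriv f z - deriv f x) (closedBall x |h|) z := fun z hz => by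
    have hfz := ((hf.differentiableOn (by norm_num)).differentiableAt
      (hU.mem_nhds (hδU (hball hz)))).hasDerivAt
    exact (hfz.sub (hasDerivAt_mul_const (deriv f x))).hasDerivWithinAt
  have hbound : ∀ z ∈ closedBall x |h|, ‖deriv f z - deriv f x‖ ≤ L * |h| := fun z hz =>
    (hL.norm_sub_le (hball hz) (hball hx)).trans
      (mul_le_mul_of_nonneg_left (by simpa [← Real.dist_eq] using hz) L.2)
  have := (convex_closedBall x |h|).norm_image_sub_le_of_norm_hasDerivWithin_le hderiv hbound
    hx (add_mem_closedBall_abs x h)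
  simp only [add_sub_cancel_left, Real.norm_eq_abs] at this ⊢
  rw [abs_pow, pow_two, ← mul_assoc]
  convert this using 2
  ring

end UniformExpansion

open NNReal in
lemma abs_mul_sub_integral_le_of_lipschitzOnWith {f : ℝ → ℝ} {a b : ℝ} {L : ℝ≥0} (hab : a ≤ b)
    (hf : LipschitzOnWith L f (Icc a b)) :
    |(b - a) * f b - ∫ t in a..b, f t| ≤ L * (b - a) ^ 2 := by
  have hbound : ∀ t ∈ uIoc a b, ‖f b - f t‖ ≤ L * (b - a) := fun t ht => by
    rw [uIoc_of_le hab] at ht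
    refine (hf.norm_sub_le (right_mem_Icc.2 hab) (Ioc_subset_Icc_self ht)).trans ?_
    rw [Real.norm_eq_abs, abs_of_nonneg (by linarith [ht.2])]
    exact mul_le_mul_of_nonneg_left (by linarith [ht.1]) L.2
  have h := intervalIntegral.norm_integral_le_of_norm_le_const hbound
  rw [intervalIntegral.integral_sub intervalIntegrable_const
    ((hf.continuousOn).intervalIntegrable_of_Icc hab), intervalIntegral.integral_const,
    smul_eq_mul, Real.norm_eq_abs, abs_of_nonneg (sub_nonneg.2 hab)] at h
  linarith

lemma sum_Icc_one_eq_sum_range {M : Type*} [AddCommMonoid M] (F : ℕ → M) (N : ℕ) :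
    ∑ j ∈ Finset.Icc 1 N, F j = ∑ i ∈ Finset.range N, F (i + 1) := by
  rw [← Finset.Ico_add_one_right_eq_Icc, Finset.sum_Ico_eq_sum_range]
  simp [add_comm]

open NNReal in
lemma abs_riemannSum_sub_integral_le {f : ℝ → ℝ} {L : ℝ≥0}
    (hf : LipschitzOnWith L f (Icc 0 1)) {N : ℕ} (hN : N ≠ 0) :
    |1 / N * ∑ j ∈ Finset.Icc 1 N, f (j / N) - ∫ t in (0 : ℝ)..1, f t| ≤ L / N := by
  have hNpos : (0 : ℝ) < N := by positivity
  have hgrid : ∀ i ≤ N, (i : ℝ) / N ∈ Icc (0 : ℝ) 1 := fun i hi =>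
    ⟨by positivity, div_le_one_of_le₀ (by exact_mod_cast hi) hNpos.le⟩
  have hstep : ∀ i : ℕ, ((i + 1 : ℕ) : ℝ) / N - i / N = 1 / N := fun i => by push_cast; ring
  have hle : ∀ i : ℕ, (i : ℝ) / N ≤ ((i + 1 : ℕ) : ℝ) / N := fun i => by
    rw [← sub_nonneg, hstep]; positivity
  have hcell : ∀ i < N, LipschitzOnWith L f (Icc ((i : ℝ) / N) (((i + 1 : ℕ) : ℝ) / N)) :=
    fun i hi => hf.mono (Icc_subset_Icc (hgrid i hi.le).1 (hgrid (i + 1) hi).2)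
  have hsplit := intervalIntegral.sum_integral_adjacent_intervals (a := fun i : ℕ => (i : ℝ) / N)
    (f := f) (μ := MeasureTheory.volume) fun i hi =>
      (hcell i hi).continuousOn.intervalIntegrable_of_Icc (hle i)
  simp only [Nat.cast_zero, zero_div, div_self hNpos.ne'] at hsplit
  rw [← hsplit, Finset.mul_sum, sum_Icc_one_eq_sum_range, ← Finset.sum_sub_distrib]
  calc _ ≤ ∑ i ∈ Finset.range N, (L * (1 / N) ^ 2 : ℝ) :=
        (Finset.abs_sum_le_sum_abs _ _).trans (Finset.sum_le_sum fun i hi => by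
          simpa only [hstep] using abs_mul_sub_integral_le_of_lipschitzOnWith (hle i)
            (hcell i (Finset.mem_range.1 hi)))
    _ = L / N := by
      rw [Finset.sum_const, Finset.card_range, nsmul_eq_mul]
      field_simp

lemma sum_Icc_sub_eq_sub (F : ℝ → ℝ) (N : ℕ) :
    ∑ j ∈ Finset.Icc 1 N, (F ((j : ℝ) - 1) - F j) = F 0 - F N := by
  induction N with
  | zero => simp
  | succ N ih =>
    rw [Finset.sum_Icc_succ_top (by omega), ih, Nat.cast_succ, add_sub_cancel_right]
    ring

lemma abs_sum_Icc_le_of_abs_le_cube {R : ℝ → ℝ → ℝ} {C ε : ℝ}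
    (hR : ∀ h, |h| < ε → ∀ x ∈ Icc (0 : ℝ) 1, |R (x + h) x| ≤ C * |h| ^ 3) {N : ℕ}
    (hN : N ≠ 0) (hNε : 1 / (N : ℝ) < ε) :
    |∑ j ∈ Finset.Icc 1 N, R (((j : ℝ) - 1) / N) (j / N)| ≤ C / N ^ 2 := by
  have hNpos : (0 : ℝ) < N := by positivity
  have hterm : ∀ j ∈ Finset.Icc 1 N, |R (((j : ℝ) - 1) / N) (j / N)| ≤ C * (1 / N) ^ 3 := by
    intro j hj
    have hjN : (j : ℝ) ≤ N := by exact_mod_cast (Finset.mem_Icc.1 hj).2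
    have h := hR (-(1 / N)) (by rwa [abs_neg, abs_of_pos (by positivity)]) (j / N)
      ⟨by positivity, div_le_one_of_le₀ hjN hNpos.le⟩
    rwa [abs_neg, abs_of_pos (one_div_pos.2 hNpos), ← sub_eq_add_neg, ← sub_div] at h
  calc _ ≤ ∑ j ∈ Finset.Icc 1 N, C * (1 / (N : ℝ)) ^ 3 :=
        (Finset.abs_sum_le_sum_abs _ _).trans (Finset.sum_le_sum hterm)
    _ = C / N ^ 2 := by
      rw [Finset.sum_const, Nat.card_Icc, add_tsub_cancel_right, nsmul_eq_mul]
      field_simp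

/-- `(a c μ + b d)² + μ (a d - b c)² = (a² μ + b²)(c² μ + d²)` is Lagrange's identity; since
`Real.log` is even, no sign condition on `a c μ + b d` is needed. -/
lemma log_div_eq_of_lagrange (a b c d μ : ℝ) (h₁ : a ^ 2 * μ + b ^ 2 ≠ 0)
    (h₂ : c ^ 2 * μ + d ^ 2 ≠ 0)
    (hw : 1 - μ * (a * d - b * c) ^ 2 / ((a ^ 2 * μ + b ^ 2) * (c ^ 2 * μ + d ^ 2)) ≠ 0) :
    Real.log ((a * c * μ + b * d) / (c ^ 2 * μ + d ^ 2))
      = Real.log (a ^ 2 * μ + b ^ 2) / 2 - Real.log (c ^ 2 * μ + d ^ 2) / 2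
        + Real.log (1 - μ * (a * d - b * c) ^ 2 / ((a ^ 2 * μ + b ^ 2) * (c ^ 2 * μ + d ^ 2)))
          / 2 := by
  have hsq : ((a * c * μ + b * d) / (c ^ 2 * μ + d ^ 2)) ^ 2 = (a ^ 2 * μ + b ^ 2)
      * (1 - μ * (a * d - b * c) ^ 2 / ((a ^ 2 * μ + b ^ 2) * (c ^ 2 * μ + d ^ 2)))
      / (c ^ 2 * μ + d ^ 2) := by
    field_simp
    ring
  have hlog := congrArg Real.log hsq
  rw [Real.log_pow, Real.log_div (mul_ne_zero h₁ hw) h₂, Real.log_mul h₁ hw] at hlog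
  push_cast at hlog
  linarith

noncomputable def marginalVariance (μ : ℝ) (α σ : ℝ → ℝ) (t : ℝ) : ℝ := α t ^ 2 * μ + σ t ^ 2

noncomputable def wronskian (α σ : ℝ → ℝ) (t : ℝ) : ℝ := α t * deriv σ t - σ t * deriv α t

noncomputable def errorDensity (μ : ℝ) (α σ : ℝ → ℝ) (t : ℝ) : ℝ :=
  μ / 2 * (wronskian α σ t ^ 2 / marginalVariance μ α σ t ^ 2)

noncomputable def logRatioRemainder (μ : ℝ) (α σ : ℝ → ℝ) (y x : ℝ) : ℝ :=
  Real.log ((α y * α x * μ + σ y * σ x) / marginalVariance μ α σ x)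
    - (Real.log (marginalVariance μ α σ y) / 2 - Real.log (marginalVariance μ α σ x) / 2)
    + (y - x) ^ 2 * errorDensity μ α σ x

section Schedule

variable {μ : ℝ} {α σ : ℝ → ℝ} {U K : Set ℝ}

lemma contDiffOn_marginalVariance {n : WithTop ℕ∞} (hα : ContDiffOn ℝ n α U)
    (hσ : ContDiffOn ℝ n σ U) : ContDiffOn ℝ n (marginalVariance μ α σ) U :=
  ((hα.pow 2).mul contDiffOn_const).add (hσ.pow 2)

lemma contDiffOn_wronskian (hα : ContDiffOn ℝ 2 α U) (hσ : ContDiffOn ℝ 2 σ U) (hU : IsOpen U) :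
    ContDiffOn ℝ 1 (wronskian α σ) U :=
  ((hα.of_le (by norm_num)).mul (hσ.deriv_of_isOpen hU (by norm_num))).sub
    ((hσ.of_le (by norm_num)).mul (hα.deriv_of_isOpen hU (by norm_num)))

lemma contDiffOn_errorDensity (hα : ContDiffOn ℝ 2 α U) (hσ : ContDiffOn ℝ 2 σ U)
    (hU : IsOpen U) (hg : ∀ t ∈ U, marginalVariance μ α σ t ≠ 0) :
    ContDiffOn ℝ 1 (errorDensity μ α σ) U :=
  contDiffOn_const.mul (((contDiffOn_wronskian hα hσ hU).pow 2).div
    ((contDiffOn_marginalVariance (hα.of_le (by norm_num)) (hσ.of_le (by norm_num))).pow 2)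
    fun t ht => pow_ne_zero 2 (hg t ht))

lemma contDiffOn_inv_marginalVariance {n : WithTop ℕ∞} (hα : ContDiffOn ℝ n α U)
    (hσ : ContDiffOn ℝ n σ U) (hg : ∀ t ∈ U, marginalVariance μ α σ t ≠ 0) :
    ContDiffOn ℝ n (fun t => (marginalVariance μ α σ t)⁻¹) U :=
  (contDiffOn_marginalVariance hα hσ).inv hg

lemma exists_isOpen_marginalVariance_ne_zero {s : Set ℝ} (hs : IsOpen s)
    (hα : ContinuousOn α s) (hσ : ContinuousOn σ s) (hKs : K ⊆ s)
    (hK : ∀ t ∈ K, marginalVariance μ α σ t ≠ 0) :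
    ∃ U ⊆ s, IsOpen U ∧ K ⊆ U ∧ ∀ t ∈ U, marginalVariance μ α σ t ≠ 0 :=
  ⟨s ∩ marginalVariance μ α σ ⁻¹' {0}ᶜ, inter_subset_left,
    (((hα.pow 2).mul continuousOn_const).add (hσ.pow 2)).isOpen_inter_preimage hs
      isOpen_compl_singleton, fun t ht => ⟨hKs ht, hK t ht⟩, fun _ ht => ht.2⟩

lemma isBigO_cross_add_wronskian (hU : IsOpen U) (hK : IsCompact K) (hKU : K ⊆ U)
    (hα : ContDiffOn ℝ 2 α U) (hσ : ContDiffOn ℝ 2 σ U) :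
    (fun p : ℝ × ℝ => α (p.2 + p.1) * σ p.2 - σ (p.2 + p.1) * α p.2 + p.1 * wronskian α σ p.2)
      =O[𝓝 0 ×ˢ 𝓟 K] (fun p => p.1 ^ 2) := by
  have hαK := (hα.continuousOn.mono hKU).isBigO_one_comp_snd hK
  have hσK := (hσ.continuousOn.mono hKU).isBigO_one_comp_snd hK
  refine ((((hα.isBigO_taylor hU hK hKU).mul hσK).sub
    ((hσ.isBigO_taylor hU hK hKU).mul hαK))).congr (fun p => ?_) fun p => mul_one _
  simp only [wronskian]
  ring

lemma isBigO_wronskian_mul (hU : IsOpen U) (hK : IsCompact K) (hKU : K ⊆ U)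
    (hα : ContDiffOn ℝ 2 α U) (hσ : ContDiffOn ℝ 2 σ U) :
    (fun p : ℝ × ℝ => p.1 * wronskian α σ p.2) =O[𝓝 0 ×ˢ 𝓟 K] (fun p => p.1) :=
  ((isBigO_refl _ _).mul (((contDiffOn_wronskian hα hσ hU).continuousOn.mono hKU
    ).isBigO_one_comp_snd hK)).congr_right fun _ => mul_one _

lemma isBigO_cross (hU : IsOpen U) (hK : IsCompact K) (hKU : K ⊆ U)
    (hα : ContDiffOn ℝ 2 α U) (hσ : ContDiffOn ℝ 2 σ U) :
    (fun p : ℝ × ℝ => α (p.2 + p.1) * σ p.2 - σ (p.2 + p.1) * α p.2)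
      =O[𝓝 0 ×ˢ 𝓟 K] (fun p => p.1) :=
  (((isBigO_cross_add_wronskian hU hK hKU hα hσ).trans
    (isBigO_fst_pow_pow _ (by norm_num : 1 ≤ 2))).congr_right (fun _ => pow_one _)).sub
    (isBigO_wronskian_mul hU hK hKU hα hσ) |>.congr_left fun p => by ring

lemma isBigO_cross_sq_div (hU : IsOpen U) (hK : IsCompact K) (hKU : K ⊆ U)
    (hα : ContDiffOn ℝ 2 α U) (hσ : ContDiffOn ℝ 2 σ U)
    (hg : ∀ t ∈ U, marginalVariance μ α σ t ≠ 0) :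
    (fun p : ℝ × ℝ => μ * (α (p.2 + p.1) * σ p.2 - σ (p.2 + p.1) * α p.2) ^ 2
        / (marginalVariance μ α σ (p.2 + p.1) * marginalVariance μ α σ p.2))
      =O[𝓝 0 ×ˢ 𝓟 K] (fun p => p.1 ^ 2) := by
  have hginv := contDiffOn_inv_marginalVariance hα hσ hg
  exact (((((isBigO_cross hU hK hKU hα hσ).pow 2).mul
    (hginv.continuousOn.isBigO_one_comp_add hU hK hKU)).mul
    ((hginv.continuousOn.mono hKU).isBigO_one_comp_snd hK)).const_mul_left μ).congr
    (fun p => by ring) fun p => by ring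

lemma isBigO_cross_sq_div_sub_errorDensity (hU : IsOpen U) (hK : IsCompact K) (hKU : K ⊆ U)
    (hα : ContDiffOn ℝ 2 α U) (hσ : ContDiffOn ℝ 2 σ U)
    (hg : ∀ t ∈ U, marginalVariance μ α σ t ≠ 0) :
    (fun p : ℝ × ℝ => μ * (α (p.2 + p.1) * σ p.2 - σ (p.2 + p.1) * α p.2) ^ 2
        / (marginalVariance μ α σ (p.2 + p.1) * marginalVariance μ α σ p.2) / 2
        - p.1 ^ 2 * errorDensity μ α σ p.2)
      =O[𝓝 0 ×ˢ 𝓟 K] (fun p => p.1 ^ 3) := by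
  have hginv := contDiffOn_inv_marginalVariance hα hσ hg
  have hgy := hginv.continuousOn.isBigO_one_comp_add hU hK hKU
  have hgx := (hginv.continuousOn.mono hKU).isBigO_one_comp_snd hK
  have hW := isBigO_wronskian_mul hU hK hKU hα hσ
  have h₁ := ((((isBigO_cross_add_wronskian hU hK hKU hα hσ).mul
    ((isBigO_cross hU hK hKU hα hσ).sub hW)).mul hgy).mul hgx).congr_right
    (g₂ := fun p => p.1 ^ 3) fun p => by ring
  have h₂ := (((hW.pow 2).mul hgx).mul ((hginv.of_le (by norm_num)).isBigO_comp_add_sub hU hK hKU)).congr_right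
    (g₂ := fun p => p.1 ^ 3) fun p => by ring
  refine ((h₁.add h₂).const_mul_left (μ / 2)).congr_left fun p => ?_
  simp only [errorDensity]
  ring

lemma isBigO_logRatioRemainder (hU : IsOpen U) (hK : IsCompact K) (hKU : K ⊆ U)
    (hα : ContDiffOn ℝ 2 α U) (hσ : ContDiffOn ℝ 2 σ U)
    (hg : ∀ t ∈ U, marginalVariance μ α σ t ≠ 0) :
    (fun p : ℝ × ℝ => logRatioRemainder μ α σ (p.2 + p.1) p.2)
      =O[𝓝 0 ×ˢ 𝓟 K] (fun p => p.1 ^ 3) := by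
  set g := marginalVariance μ α σ
  set w := fun p : ℝ × ℝ => μ * (α (p.2 + p.1) * σ p.2 - σ (p.2 + p.1) * α p.2) ^ 2
    / (g (p.2 + p.1) * g p.2) with hw_def
  have hw : w =O[𝓝 0 ×ˢ 𝓟 K] (fun p => p.1 ^ 2) := isBigO_cross_sq_div hU hK hKU hα hσ hg
  have hw₀ : Tendsto w (𝓝 0 ×ˢ 𝓟 K) (𝓝 0) :=
    hw.trans_tendsto (by simpa using (tendsto_fst (f := 𝓝 (0 : ℝ)) (g := 𝓟 K)).pow 2)
  have hlog : (fun p => (Real.log (1 - w p) + w p) / 2) =O[𝓝 0 ×ˢ 𝓟 K] (fun p => p.1 ^ 3) :=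
    (((isBigO_log_one_sub_add_self hw₀).trans (((hw.pow 2).congr_right fun p => by ring).trans
      (isBigO_fst_pow_pow _ (by norm_num : 3 ≤ 4)))).const_mul_left (1 / 2)).congr_left
      fun p => by ring
  refine (hlog.sub (isBigO_cross_sq_div_sub_errorDensity hU hK hKU hα hσ hg)).congr' ?_
    EventuallyEq.rfl
  filter_upwards [eventually_add_mem hU hK hKU, eventually_snd_mem K,
    hw₀.eventually (Ioo_mem_nhds (by norm_num : (-1 : ℝ) < 0) one_pos)] with p hy hx hwp
  have hlag : Real.log ((α (p.2 + p.1) * α p.2 * μ + σ (p.2 + p.1) * σ p.2) / g p.2)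
      = Real.log (g (p.2 + p.1)) / 2 - Real.log (g p.2) / 2 + Real.log (1 - w p) / 2 :=
    log_div_eq_of_lagrange _ _ _ _ μ (hg _ hy) (hg _ (hKU hx)) (sub_ne_zero.2 hwp.2.ne')
  simp only [logRatioRemainder]
  linear_combination -hlag

end Schedule

lemma sum_log_ratio_eq (μ : ℝ) (α σ : ℝ → ℝ) {N : ℕ} (hN : N ≠ 0) :
    ∑ j ∈ Finset.Icc 1 N, Real.log ((α (((j : ℝ) - 1) / N) * α (j / N) * μ
        + σ (((j : ℝ) - 1) / N) * σ (j / N)) / marginalVariance μ α σ (j / N))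
      = (Real.log (marginalVariance μ α σ 0) - Real.log (marginalVariance μ α σ 1)) / 2
        - 1 / N * (1 / N * ∑ j ∈ Finset.Icc 1 N, errorDensity μ α σ (j / N))
        + ∑ j ∈ Finset.Icc 1 N, logRatioRemainder μ α σ (((j : ℝ) - 1) / N) (j / N) := by
  set F : ℝ → ℝ := fun t => Real.log (marginalVariance μ α σ (t / N)) / 2 with hF
  have hterm : ∀ j ∈ Finset.Icc 1 N, Real.log ((α (((j : ℝ) - 1) / N) * α (j / N) * μ
        + σ (((j : ℝ) - 1) / N) * σ (j / N)) / marginalVariance μ α σ (j / N))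
      = F ((j : ℝ) - 1) - F j - 1 / N * (1 / N * errorDensity μ α σ (j / N))
        + logRatioRemainder μ α σ (((j : ℝ) - 1) / N) (j / N) := fun j _ => by
    simp only [hF, logRatioRemainder]
    ring
  rw [Finset.sum_congr rfl hterm, Finset.sum_add_distrib, Finset.sum_sub_distrib,
    sum_Icc_sub_eq_sub, Finset.mul_sum, Finset.mul_sum]
  simp only [hF, zero_div, div_self (Nat.cast_ne_zero.2 hN : (N : ℝ) ≠ 0)]
  ring
theorem stmt_6_general (μ : ℝ) (α σ : ℝ → ℝ) (s : Set ℝ) (hs : IsOpen s)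
    (hsub : Set.Icc (0 : ℝ) 1 ⊆ s)
    (hα : ContDiffOn ℝ 3 α s) (hσ : ContDiffOn ℝ 3 σ s)
    (hpos : ∀ t ∈ Set.Icc (0 : ℝ) 1, 0 < (α t) ^ 2 * μ + (σ t) ^ 2)
    (S : ℕ → ℝ)
    (hS : ∀ N : ℕ, S N = ∑ j ∈ Finset.Icc 1 N,
      Real.log ((α (((j : ℝ) - 1) / (N : ℝ)) * α ((j : ℝ) / (N : ℝ)) * μ
          + σ (((j : ℝ) - 1) / (N : ℝ)) * σ ((j : ℝ) / (N : ℝ)))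
        / ((α ((j : ℝ) / (N : ℝ))) ^ 2 * μ + (σ ((j : ℝ) / (N : ℝ))) ^ 2)))
    (I E : ℝ)
    (hI : I = (1 / 2) * Real.log (((α 0) ^ 2 * μ + (σ 0) ^ 2) / ((α 1) ^ 2 * μ + (σ 1) ^ 2)))
    (hE : E = -(μ / 2) * ∫ t in (0 : ℝ)..1,
        (α t * deriv σ t - σ t * deriv α t) ^ 2 / ((α t) ^ 2 * μ + (σ t) ^ 2) ^ 2) :
    ∃ C > 0, ∃ N₀ : ℕ, ∀ N ≥ N₀,
      |S N - I - E / (N : ℝ)| ≤ C / (N : ℝ) ^ 2 := by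
  obtain ⟨U, hUs, hU, hKU, hgU⟩ := exists_isOpen_marginalVariance_ne_zero hs hα.continuousOn
    hσ.continuousOn hsub fun t ht => (hpos t ht).ne'
  have hαU : ContDiffOn ℝ 2 α U := (hα.of_le (by norm_num)).mono hUs
  have hσU : ContDiffOn ℝ 2 σ U := (hσ.of_le (by norm_num)).mono hUs
  obtain ⟨C, hC, ε, hε, hR⟩ := exists_bound_of_isBigO_fst_pow
    (isBigO_logRatioRemainder hU isCompact_Icc hKU hαU hσU hgU)
  obtain ⟨L, hL⟩ := (contDiffOn_errorDensity hαU hσU hU hgU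
    ).exists_lipschitzOnWith_of_isCompact_subset hU isCompact_Icc hKU
  refine ⟨C + L, by positivity, ⌈ε⁻¹⌉₊ + 1, fun N hN => ?_⟩
  have hN₀ : N ≠ 0 := by omega
  have hNε : 1 / (N : ℝ) < ε := by
    rw [one_div]
    exact inv_lt_of_inv_lt₀ hε ((Nat.le_ceil _).trans_lt (by exact_mod_cast hN))
  have hI' : I = (Real.log (marginalVariance μ α σ 0)
      - Real.log (marginalVariance μ α σ 1)) / 2 := by
    rw [hI, Real.log_div (hpos 0 (left_mem_Icc.2 zero_le_one)).ne'
      (hpos 1 (right_mem_Icc.2 zero_le_one)).ne']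
    simp only [marginalVariance]
    ring
  have hE' : E = -∫ t in (0 : ℝ)..1, errorDensity μ α σ t := by
    rw [hE, neg_mul, ← intervalIntegral.integral_const_mul]
    rfl
  rw [(hS N).trans (sum_log_ratio_eq μ α σ hN₀), hI', hE']
  calc _ = |∑ j ∈ Finset.Icc 1 N, logRatioRemainder μ α σ (((j : ℝ) - 1) / N) (j / N)
        - 1 / N * (1 / N * ∑ j ∈ Finset.Icc 1 N, errorDensity μ α σ (j / N)
          - ∫ t in (0 : ℝ)..1, errorDensity μ α σ t)| := by ring_nf
    _ ≤ C / N ^ 2 + 1 / N * (L / N) := by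
      refine (abs_sub _ _).trans (add_le_add (abs_sum_Icc_le_of_abs_le_cube hR hN₀ hNε) ?_)
      rw [abs_mul, abs_of_pos (by positivity)]
      exact mul_le_mul_of_nonneg_left (abs_riemannSum_sub_integral_le hL hN₀) (by positivity)
    _ = (C + L) / N ^ 2 := by ring

/-- First-order Euler–Maclaurin expansion of the discretized reverse-sampling
log-variance sum: `S_N(μ) = I(μ) + E¹(μ)/N + O(1/N²)`. -/
theorem stmt_6 (μ : ℝ) (hμ : 0 < μ) (α σ : ℝ → ℝ) (s : Set ℝ) (hs : IsOpen s)
    (hsub : Set.Icc (0 : ℝ) 1 ⊆ s)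
    (hα : ContDiffOn ℝ 3 α s) (hσ : ContDiffOn ℝ 3 σ s)
    (hpos : ∀ t ∈ Set.Icc (0 : ℝ) 1, 0 < (α t) ^ 2 * μ + (σ t) ^ 2)
    (S : ℕ → ℝ)
    (hS : ∀ N : ℕ, S N = ∑ j ∈ Finset.Icc 1 N,
      Real.log ((α (((j : ℝ) - 1) / (N : ℝ)) * α ((j : ℝ) / (N : ℝ)) * μ
          + σ (((j : ℝ) - 1) / (N : ℝ)) * σ ((j : ℝ) / (N : ℝ)))
        / ((α ((j : ℝ) / (N : ℝ))) ^ 2 * μ + (σ ((j : ℝ) / (N : ℝ))) ^ 2)))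
    (I E : ℝ)
    (hI : I = (1 / 2) * Real.log (((α 0) ^ 2 * μ + (σ 0) ^ 2) / ((α 1) ^ 2 * μ + (σ 1) ^ 2)))
    (hE : E = -(μ / 2) * ∫ t in (0 : ℝ)..1,
        (α t * deriv σ t - σ t * deriv α t) ^ 2 / ((α t) ^ 2 * μ + (σ t) ^ 2) ^ 2) :
    ∃ C > 0, ∃ N₀ : ℕ, ∀ N ≥ N₀,
      |S N - I - E / (N : ℝ)| ≤ C / (N : ℝ) ^ 2 :=
  stmt_6_general μ α σ s hs hsub hα hσ hpos S hS I E hI hE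
end

section
/- Let μ > 0 and let α, σ : ℝ → ℝ be continuously differentiable on an open interval containing [0,1], with α(t)²·μ + σ(t)² > 0 for all t ∈ [0,1]. Then exp(2·S_N(μ)) tends to (α(0)²·μ + σ(0)²)/(α(1)²·μ + σ(1)²) as N → ∞. In particular, under the variance-preserving boundary conditions α(0) = 1, σ(0) = 0, α(1) = 0, σ(1) = 1, the generated variance exp(2·S_N(μ)) converges to the source variance μ, so the reverse sampling process is asymptotically consistent. -/
/-!
Write `v t = (√μ α t, σ t)` and `g t = ‖v t‖²`, so the `j`-th summand of `S N` is
`log (⟪v (t_{j-1}), v t_j⟫ / g t_j)` with `t_j = j / N`. Doubling and exponentiating,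
`exp (2 S N) = ∏ cos² θ_j · ∏ g t_{j-1} / g t_j`, where `θ_j` is the angle between consecutive
vectors, and the second product telescopes to `g 0 / g 1`. By Lagrange's identity
`1 - cos² θ_j = μ D_j² / (g t_{j-1} g t_j)` with `D_j = α t_{j-1} σ t_j - α t_j σ t_{j-1}`,
which is `O(1/N)` because `α` and `σ` are Lipschitz on `[0,1]`; as `g` is bounded below there,
the first product lies between `(1 - K/N²)^N ≥ 1 - K/N` and `1`.
-/

open Filter Topology Finset

lemma prod_range_div_of_ne_zero {K : Type*} [Field K] (f : ℕ → K) (n : ℕ)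
    (hf : ∀ i ≤ n, f i ≠ 0) : ∏ i ∈ range n, f i / f (i + 1) = f 0 / f n := by
  induction n with
  | zero => simp [div_self (hf 0 le_rfl)]
  | succ n ih =>
    rw [prod_range_succ, ih fun i hi => hf i (by omega),
      div_mul_div_cancel₀ (hf n (by omega))]

lemma exp_two_mul_log {x : ℝ} (hx : x ≠ 0) : Real.exp (2 * Real.log x) = x ^ 2 := by
  rw [show 2 * Real.log x = Real.log (x ^ 2) by simp [Real.log_pow],
    Real.exp_log (by positivity)]

lemma exp_two_mul_sum_log_div {p G : ℕ → ℝ} {n : ℕ} (hp : ∀ i ∈ range n, p i ≠ 0)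
    (hG : ∀ i ≤ n, G i ≠ 0) :
    Real.exp (2 * ∑ i ∈ range n, Real.log (p i / G (i + 1))) =
      (∏ i ∈ range n, p i ^ 2 / (G i * G (i + 1))) * (G 0 / G n) := by
  have hterm : ∀ i ∈ range n, Real.exp (2 * Real.log (p i / G (i + 1))) =
      p i ^ 2 / (G i * G (i + 1)) * (G i / G (i + 1)) := by
    intro i hi
    have hi' : i < n := mem_range.mp hi
    rw [exp_two_mul_log (div_ne_zero (hp i hi) (hG (i + 1) hi'))]
    field_simp [hG i hi'.le]
  rw [mul_sum, Real.exp_sum, prod_congr rfl hterm, prod_mul_distrib,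
    prod_range_div_of_ne_zero G n hG]

lemma abs_mul_sub_mul_le (a b c d : ℝ) :
    |a * d - c * b| ≤ |a| * |d - b| + |b| * |c - a| := by
  calc |a * d - c * b| = |a * (d - b) - b * (c - a)| := by ring_nf
    _ ≤ |a * (d - b)| + |b * (c - a)| := abs_sub _ _
    _ = |a| * |d - b| + |b| * |c - a| := by rw [abs_mul, abs_mul]

lemma exists_abs_mul_sub_mul_le {α σ : ℝ → ℝ} {s : Set ℝ} (hs : IsCompact s) (hs' : Convex ℝ s)
    (hα : ContDiffOn ℝ 1 α s) (hσ : ContDiffOn ℝ 1 σ s) :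
    ∃ C, ∀ a ∈ s, ∀ b ∈ s, |α a * σ b - α b * σ a| ≤ C * |b - a| := by
  obtain ⟨A, hA⟩ := hs.exists_bound_of_continuousOn hα.continuousOn
  obtain ⟨B, hB⟩ := hs.exists_bound_of_continuousOn hσ.continuousOn
  obtain ⟨Kα, hKα⟩ := hα.exists_lipschitzOnWith one_ne_zero hs' hs
  obtain ⟨Kσ, hKσ⟩ := hσ.exists_lipschitzOnWith one_ne_zero hs' hs
  refine ⟨A * Kσ + B * Kα, fun a ha b hb => ?_⟩
  have hA0 : 0 ≤ A := (norm_nonneg _).trans (hA a ha)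
  have hB0 : 0 ≤ B := (norm_nonneg _).trans (hB a ha)
  calc |α a * σ b - α b * σ a| ≤ |α a| * |σ b - σ a| + |σ a| * |α b - α a| :=
        abs_mul_sub_mul_le _ _ _ _
    _ ≤ A * (Kσ * |b - a|) + B * (Kα * |b - a|) := by
        gcongr
        · exact hA a ha
        · exact hKσ.dist_le_mul b hb a ha
        · exact hB a ha
        · exact hKα.dist_le_mul b hb a ha
    _ = (A * Kσ + B * Kα) * |b - a| := by ring

lemma one_sub_mul_le_prod_range {r : ℕ → ℝ} {ε : ℝ} {n : ℕ} (hε : ε ≤ 1)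
    (hr : ∀ i ∈ range n, 1 - ε ≤ r i ∧ r i ≤ 1) :
    1 - n * ε ≤ ∏ i ∈ range n, r i ∧ ∏ i ∈ range n, r i ≤ 1 := by
  refine ⟨?_, prod_le_one (fun i hi => by linarith [(hr i hi).1]) fun i hi => (hr i hi).2⟩
  calc 1 - n * ε = 1 + n * (-ε) := by ring
    _ ≤ (1 + -ε) ^ n := one_add_mul_le_pow (by linarith) n
    _ = ∏ i ∈ range n, (1 - ε) := by rw [prod_const, card_range, sub_eq_add_neg]
    _ ≤ ∏ i ∈ range n, r i := prod_le_prod (fun _ _ => by linarith) fun i hi => (hr i hi).1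

lemma tendsto_prod_range_of_one_sub_div_sq_le {r : ℕ → ℕ → ℝ} {K : ℝ}
    (h : ∀ᶠ N in atTop, ∀ i ∈ range N, 1 - K / N ^ 2 ≤ r N i ∧ r N i ≤ 1) :
    Tendsto (fun N => ∏ i ∈ range N, r N i) atTop (𝓝 1) := by
  have hlow : Tendsto (fun N : ℕ => 1 - K / N) atTop (𝓝 1) := by
    simpa using (tendsto_const_div_atTop_nhds_zero_nat K).const_sub 1
  have hbounds : ∀ᶠ N : ℕ in atTop,
      1 - K / N ≤ ∏ i ∈ range N, r N i ∧ ∏ i ∈ range N, r N i ≤ 1 := by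
    filter_upwards [h, eventually_ge_atTop ⌈K⌉₊, eventually_ge_atTop 1] with N hr hKN hN
    have hN : (1 : ℝ) ≤ N := by exact_mod_cast hN
    have hε : K / N ^ 2 ≤ 1 := by
      rw [div_le_one (by positivity)]
      nlinarith [Nat.ceil_le.mp hKN]
    convert one_sub_mul_le_prod_range hε hr using 3
    field_simp
  exact tendsto_of_tendsto_of_tendsto_of_le_of_le' hlow tendsto_const_nhds
    (hbounds.mono fun _ => And.left) (hbounds.mono fun _ => And.right)

lemma eventually_pos_of_one_sub_div_sq_le {r : ℕ → ℕ → ℝ} {K : ℝ}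
    (h : ∀ᶠ N in atTop, ∀ i ∈ range N, 1 - K / N ^ 2 ≤ r N i ∧ r N i ≤ 1) :
    ∀ᶠ N in atTop, ∀ i ∈ range N, 0 < r N i := by
  have hK : ∀ᶠ N : ℕ in atTop, K < (N : ℝ) ^ 2 :=
    (tendsto_pow_atTop two_ne_zero).comp tendsto_natCast_atTop_atTop |>.eventually_gt_atTop K
  filter_upwards [h, hK, eventually_gt_atTop 0] with N hr hK hN i hi
  have hN : (0 : ℝ) < N := Nat.cast_pos.2 hN
  exact (sub_pos.2 ((div_lt_one (by positivity)).2 hK)).trans_le (hr i hi).1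

/-- `gram μ α σ a b = ⟪v a, v b⟫`, so `stepRatio μ α σ N i` is `cos² θ_{i+1}`. -/
def gram (μ : ℝ) (α σ : ℝ → ℝ) (a b : ℝ) : ℝ := α a * α b * μ + σ a * σ b

noncomputable def mesh (N i : ℕ) : ℝ := i / N

noncomputable def stepRatio (μ : ℝ) (α σ : ℝ → ℝ) (N i : ℕ) : ℝ :=
  gram μ α σ (mesh N i) (mesh N (i + 1)) ^ 2 /
    (gram μ α σ (mesh N i) (mesh N i) * gram μ α σ (mesh N (i + 1)) (mesh N (i + 1)))

lemma mesh_mem_Icc {N i : ℕ} (h : i ≤ N) : mesh N i ∈ Set.Icc (0 : ℝ) 1 :=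
  ⟨div_nonneg (Nat.cast_nonneg i) (Nat.cast_nonneg N),
    div_le_one_of_le₀ (by exact_mod_cast h) (Nat.cast_nonneg N)⟩

lemma abs_mesh_succ_sub {N : ℕ} (hN : N ≠ 0) (i : ℕ) : |mesh N (i + 1) - mesh N i| = 1 / N := by
  rw [mesh, mesh, ← sub_div, Nat.cast_succ, add_sub_cancel_left,
    abs_of_nonneg (by positivity)]

section

variable {μ : ℝ} {α σ : ℝ → ℝ}

lemma gram_self (t : ℝ) : gram μ α σ t t = α t ^ 2 * μ + σ t ^ 2 := by
  rw [gram]; ring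

lemma continuousOn_gram_self {s : Set ℝ} (hα : ContinuousOn α s) (hσ : ContinuousOn σ s) :
    ContinuousOn (fun t => gram μ α σ t t) s := by
  simp only [gram]
  fun_prop

lemma gram_sq (a b : ℝ) :
    gram μ α σ a b ^ 2 =
      gram μ α σ a a * gram μ α σ b b - μ * (α a * σ b - α b * σ a) ^ 2 := by
  simp only [gram]; ring

lemma one_sub_le_gram_sq_div {c δ a b : ℝ} (hμ : 0 ≤ μ) (hc : 0 < c)
    (ha : c ≤ gram μ α σ a a) (hb : c ≤ gram μ α σ b b) (hδ : |α a * σ b - α b * σ a| ≤ δ) :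
    1 - μ * δ ^ 2 / c ^ 2 ≤ gram μ α σ a b ^ 2 / (gram μ α σ a a * gram μ α σ b b) ∧
      gram μ α σ a b ^ 2 / (gram μ α σ a a * gram μ α σ b b) ≤ 1 := by
  set D := α a * σ b - α b * σ a
  have hc2 : c ^ 2 ≤ gram μ α σ a a * gram μ α σ b b := by
    rw [sq]; exact mul_le_mul ha hb hc.le (hc.le.trans ha)
  have hpos : 0 < gram μ α σ a a * gram μ α σ b b := (pow_pos hc 2).trans_le hc2
  have hD : D ^ 2 ≤ δ ^ 2 := by
    rw [← sq_abs]; exact pow_le_pow_left₀ (abs_nonneg D) hδ 2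
  have hratio : gram μ α σ a b ^ 2 / (gram μ α σ a a * gram μ α σ b b) =
      1 - μ * D ^ 2 / (gram μ α σ a a * gram μ α σ b b) := by
    rw [gram_sq, sub_div, div_self hpos.ne']
  rw [hratio]
  constructor
  · gcongr
  · have : 0 ≤ μ * D ^ 2 / (gram μ α σ a a * gram μ α σ b b) := by positivity
    linarith

lemma one_sub_div_sq_le_stepRatio {c C : ℝ} (hμ : 0 ≤ μ) (hc : 0 < c)
    (hcg : ∀ t ∈ Set.Icc (0 : ℝ) 1, c ≤ gram μ α σ t t)
    (hC : ∀ a ∈ Set.Icc (0 : ℝ) 1, ∀ b ∈ Set.Icc (0 : ℝ) 1,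
      |α a * σ b - α b * σ a| ≤ C * |b - a|)
    {N i : ℕ} (hi : i ∈ range N) :
    1 - μ * C ^ 2 / c ^ 2 / N ^ 2 ≤ stepRatio μ α σ N i ∧ stepRatio μ α σ N i ≤ 1 := by
  have hi : i < N := mem_range.mp hi
  have hN : N ≠ 0 := by omega
  rw [stepRatio]
  convert one_sub_le_gram_sq_div hμ hc (hcg _ (mesh_mem_Icc hi.le)) (hcg _ (mesh_mem_Icc hi))
    (hC _ (mesh_mem_Icc hi.le) _ (mesh_mem_Icc hi)) using 3
  rw [abs_mesh_succ_sub hN]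
  field_simp

lemma sum_Icc_log_eq_sum_range_log_gram (N : ℕ) :
    ∑ j ∈ Icc 1 N,
      Real.log ((α (((j : ℝ) - 1) / N) * α ((j : ℝ) / N) * μ
          + σ (((j : ℝ) - 1) / N) * σ ((j : ℝ) / N))
        / ((α ((j : ℝ) / N)) ^ 2 * μ + (σ ((j : ℝ) / N)) ^ 2)) =
      ∑ i ∈ range N, Real.log (gram μ α σ (mesh N i) (mesh N (i + 1)) /
        gram μ α σ (mesh N (i + 1)) (mesh N (i + 1))) := by
  rw [← Ico_add_one_right_eq_Icc, sum_Ico_eq_sum_range]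
  refine sum_congr rfl fun i _ => ?_
  simp only [mesh, gram]
  push_cast
  ring_nf

lemma exp_two_mul_sum_log_gram {N : ℕ} (hN : N ≠ 0)
    (hg : ∀ t ∈ Set.Icc (0 : ℝ) 1, 0 < gram μ α σ t t)
    (hr : ∀ i ∈ range N, 0 < stepRatio μ α σ N i) :
    Real.exp (2 * ∑ i ∈ range N, Real.log
        (gram μ α σ (mesh N i) (mesh N (i + 1)) / gram μ α σ (mesh N (i + 1)) (mesh N (i + 1)))) =
      (∏ i ∈ range N, stepRatio μ α σ N i) * (gram μ α σ 0 0 / gram μ α σ 1 1) := by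
  have hp : ∀ i ∈ range N, gram μ α σ (mesh N i) (mesh N (i + 1)) ≠ 0 := by
    intro i hi h
    simpa [stepRatio, h] using hr i hi
  rw [exp_two_mul_sum_log_div hp fun i hi => (hg _ (mesh_mem_Icc hi)).ne']
  have hN : (N : ℝ) ≠ 0 := Nat.cast_ne_zero.2 hN
  simp only [stepRatio, mesh, Nat.cast_zero, zero_div, div_self hN]

end

theorem stmt_7_general (μ : ℝ) (hμ : 0 < μ) (α σ : ℝ → ℝ) (s : Set ℝ)
    (hsub : Set.Icc (0 : ℝ) 1 ⊆ s)
    (hα : ContDiffOn ℝ 1 α s) (hσ : ContDiffOn ℝ 1 σ s)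
    (hpos : ∀ t ∈ Set.Icc (0 : ℝ) 1, 0 < (α t) ^ 2 * μ + (σ t) ^ 2)
    (S : ℕ → ℝ)
    (hS : ∀ N : ℕ, S N = ∑ j ∈ Finset.Icc 1 N,
      Real.log ((α (((j : ℝ) - 1) / (N : ℝ)) * α ((j : ℝ) / (N : ℝ)) * μ
          + σ (((j : ℝ) - 1) / (N : ℝ)) * σ ((j : ℝ) / (N : ℝ)))
        / ((α ((j : ℝ) / (N : ℝ))) ^ 2 * μ + (σ ((j : ℝ) / (N : ℝ))) ^ 2))) :
    Tendsto (fun N : ℕ => Real.exp (2 * S N)) atTop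
      (nhds (((α 0) ^ 2 * μ + (σ 0) ^ 2) / ((α 1) ^ 2 * μ + (σ 1) ^ 2)))
    ∧ (α 0 = 1 → σ 0 = 0 → α 1 = 0 → σ 1 = 1 →
        Tendsto (fun N : ℕ => Real.exp (2 * S N)) atTop (nhds μ)) := by
  have hα' := hα.mono hsub
  have hσ' := hσ.mono hsub
  have hg : ∀ t ∈ Set.Icc (0 : ℝ) 1, 0 < gram μ α σ t t := by simpa only [gram_self] using hpos
  obtain ⟨c, hc, hcg⟩ :=
    isCompact_Icc.exists_forall_le' (continuousOn_gram_self hα'.continuousOn hσ'.continuousOn) hg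
  obtain ⟨C, hC⟩ := exists_abs_mul_sub_mul_le isCompact_Icc (convex_Icc 0 1) hα' hσ'
  have hr : ∀ᶠ N : ℕ in atTop, ∀ i ∈ range N,
      1 - μ * C ^ 2 / c ^ 2 / N ^ 2 ≤ stepRatio μ α σ N i ∧ stepRatio μ α σ N i ≤ 1 :=
    Eventually.of_forall fun _ _ hi => one_sub_div_sq_le_stepRatio hμ.le hc hcg hC hi
  have hexp : ∀ᶠ N : ℕ in atTop, (∏ i ∈ range N, stepRatio μ α σ N i) *
      (gram μ α σ 0 0 / gram μ α σ 1 1) = Real.exp (2 * S N) := by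
    filter_upwards [eventually_pos_of_one_sub_div_sq_le hr, eventually_ne_atTop 0] with N hpos hN
    rw [hS N, sum_Icc_log_eq_sum_range_log_gram, exp_two_mul_sum_log_gram hN hg hpos]
  have hlim : Tendsto (fun N => Real.exp (2 * S N)) atTop
      (𝓝 (gram μ α σ 0 0 / gram μ α σ 1 1)) := by
    simpa using ((tendsto_prod_range_of_one_sub_div_sq_le hr).mul_const _).congr' hexp
  refine ⟨by simpa only [gram_self] using hlim, fun h0 h1 h2 h3 => ?_⟩
  simpa [gram, h0, h1, h2, h3] using hlim

/-- The generated variance `exp(2·S_N(μ))` converges, as `N → ∞`, to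
`(α(0)²μ + σ(0)²)/(α(1)²μ + σ(1)²)`; in particular, under the
variance-preserving boundary conditions it converges to the source variance
`μ`, so the reverse sampling process is asymptotically consistent. -/
theorem stmt_7 (μ : ℝ) (hμ : 0 < μ) (α σ : ℝ → ℝ) (s : Set ℝ) (hs : IsOpen s)
    (hsub : Set.Icc (0 : ℝ) 1 ⊆ s)
    (hα : ContDiffOn ℝ 1 α s) (hσ : ContDiffOn ℝ 1 σ s)
    (hpos : ∀ t ∈ Set.Icc (0 : ℝ) 1, 0 < (α t) ^ 2 * μ + (σ t) ^ 2)
    (S : ℕ → ℝ)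
    (hS : ∀ N : ℕ, S N = ∑ j ∈ Finset.Icc 1 N,
      Real.log ((α (((j : ℝ) - 1) / (N : ℝ)) * α ((j : ℝ) / (N : ℝ)) * μ
          + σ (((j : ℝ) - 1) / (N : ℝ)) * σ ((j : ℝ) / (N : ℝ)))
        / ((α ((j : ℝ) / (N : ℝ))) ^ 2 * μ + (σ ((j : ℝ) / (N : ℝ))) ^ 2))) :
    Tendsto (fun N : ℕ => Real.exp (2 * S N)) atTop
      (nhds (((α 0) ^ 2 * μ + (σ 0) ^ 2) / ((α 1) ^ 2 * μ + (σ 1) ^ 2)))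
    ∧ (α 0 = 1 → σ 0 = 0 → α 1 = 0 → σ 1 = 1 →
        Tendsto (fun N : ℕ => Real.exp (2 * S N)) atTop (nhds μ)) :=
  stmt_7_general μ hμ α σ s hsub hα hσ hpos S hS
end

section
/- Let μ > 0. For every continuously differentiable function η : [0,1) → ℝ with η(0) = 0 and η(t) → +∞ as t → 1⁻, the improper integral ∫₀¹ η'(t)² / (μ + η(t)²)² dt is at least π²/(4μ). Moreover, equality holds if and only if η(t) = √μ · tan((π/2)·t) for all t ∈ [0,1). -/
/-!
With `c = √μ`, the substitution `g = arctan (η / c)` turns the integrand into `(g')² / μ`,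
while `g` runs from `g 0 = 0` to `g 1⁻ = π / 2`. On the unit interval, Cauchy–Schwarz (the
variance of `g'` is nonnegative) gives `∫ (g')² ≥ (∫ g')² = π² / 4`, with equality iff `g'` is
constant, i.e. `g t = π t / 2`: this is the tangent law.
-/

open MeasureTheory ProbabilityTheory Set Filter Topology Real

theorem ofReal_sq_le_lintegral_sq_and_eq_iff {Ω : Type*} [MeasurableSpace Ω] {P : Measure Ω}
    [IsProbabilityMeasure P] {G : Ω → ℝ} {m : ℝ} (hG : AEStronglyMeasurable G P)
    (hm : Integrable G P → ∫ x, G x ∂P = m) :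
    ENNReal.ofReal (m ^ 2) ≤ ∫⁻ x, ENNReal.ofReal (G x ^ 2) ∂P ∧
      (∫⁻ x, ENNReal.ofReal (G x ^ 2) ∂P = ENNReal.ofReal (m ^ 2) ↔ G =ᵐ[P] fun _ => m) := by
  have hconst : G =ᵐ[P] (fun _ => m) → ∫⁻ x, ENNReal.ofReal (G x ^ 2) ∂P = ENNReal.ofReal (m ^ 2) :=
    fun h => by
      rw [lintegral_congr_ae (h.mono fun x hx => by rw [hx])]
      simp
  by_cases hfin : ∫⁻ x, ENNReal.ofReal (G x ^ 2) ∂P = ⊤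
  · refine ⟨hfin ▸ le_top, fun h => absurd (h ▸ hfin) ENNReal.ofReal_ne_top, fun h => ?_⟩
    exact absurd (hconst h ▸ hfin) ENNReal.ofReal_ne_top
  have hL2 : MemLp G 2 P := (memLp_two_iff_integrable_sq hG).2
    ⟨hG.pow 2, (hasFiniteIntegral_iff_ofReal (ae_of_all _ fun x => sq_nonneg _)).2
      (lt_top_iff_ne_top.2 hfin)⟩
  have hmean := hm (hL2.integrable one_le_two)
  have hlint : ∫⁻ x, ENNReal.ofReal (G x ^ 2) ∂P = ENNReal.ofReal (∫ x, G x ^ 2 ∂P) :=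
    (ofReal_integral_eq_lintegral_ofReal hL2.integrable_sq (ae_of_all _ fun x => sq_nonneg _)).symm
  have hvar : ∫ x, (G x - m) ^ 2 ∂P = ∫ x, G x ^ 2 ∂P - m ^ 2 := by
    rw [← hmean, ← variance_eq_integral hG.aemeasurable, variance_eq_sub hL2]
    rfl
  have hvar_nonneg : 0 ≤ ∫ x, (G x - m) ^ 2 ∂P := integral_nonneg fun x => sq_nonneg _
  refine ⟨hlint ▸ ENNReal.ofReal_le_ofReal (by linarith), fun h => ?_, hconst⟩
  rw [hlint, ENNReal.ofReal_eq_ofReal_iff (integral_nonneg fun x => sq_nonneg _) (sq_nonneg _)] at h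
  have hzero := (integral_eq_zero_iff_of_nonneg (fun x => sq_nonneg _)
    (hL2.sub (memLp_const m)).integrable_sq).1 (by simp only [Pi.sub_apply]; rw [hvar, h, sub_self])
  filter_upwards [hzero] with x hx
  simpa [sub_eq_zero] using hx

theorem eqOn_const_iff_of_hasDerivWithinAt_Ico {f f' : ℝ → ℝ} {a b c : ℝ}
    (hf : ∀ x ∈ Ico a b, HasDerivWithinAt f (f' x) (Ico a b) x) :
    EqOn f' (fun _ => c) (Ico a b) ↔ ∀ x ∈ Ico a b, f x = f a + c * (x - a) := by
  have haffine : ∀ x, HasDerivAt (fun y => f a + c * (y - a)) c x := fun x => by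
    simpa using ((hasDerivAt_id x).sub_const a).const_mul c |>.const_add (f a)
  constructor
  · intro hc x hx
    have hfc : ContinuousOn f (Icc a x) := fun y hy =>
      ((hf y ⟨hy.1, hy.2.trans_lt hx.2⟩).continuousWithinAt).mono
        fun z hz => ⟨hz.1, hz.2.trans_lt hx.2⟩
    refine eq_of_has_deriv_right_eq (fun y hy => ?_) (fun y _ => (haffine y).hasDerivWithinAt)
      hfc (fun y _ => (haffine y).continuousAt.continuousWithinAt) (by simp) x ⟨hx.1, le_rfl⟩
    have hy' : y ∈ Ico a b := ⟨hy.1, hy.2.trans hx.2⟩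
    exact (hc hy' ▸ hf y hy').mono_of_mem_nhdsWithin (Ico_mem_nhdsGE_of_mem hy')
  · intro heq x hx
    exact (uniqueDiffOn_Ico a b x hx).eq_deriv _ (hf x hx)
      ((haffine x).hasDerivWithinAt.congr heq (heq x hx))

theorem hasDerivWithinAt_arctan_div_sqrt {f : ℝ → ℝ} {f' μ x : ℝ} {s : Set ℝ} (hμ : 0 < μ)
    (hf : HasDerivWithinAt f f' s x) :
    HasDerivWithinAt (fun t => arctan (f t / √μ)) (√μ * f' / (μ + f x ^ 2)) s x := by
  convert (hf.div_const √μ).arctan using 1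
  have : 0 < √μ := sqrt_pos.2 hμ
  field_simp
  rw [sq_sqrt hμ.le]

theorem arctan_div_eq_iff {c y x : ℝ} (hc : 0 < c) (hx₁ : -(π / 2) < x) (hx₂ : x < π / 2) :
    arctan (y / c) = x ↔ y = c * tan x := by
  constructor
  · intro h
    rw [← h, tan_arctan, mul_div_cancel₀ _ hc.ne']
  · rintro rfl
    rw [mul_div_cancel_left₀ _ hc.ne', arctan_tan hx₁ hx₂]

theorem lintegral_ofReal_sq_div_sq_add_sq {α : Type*} [MeasurableSpace α] (ν : Measure α)
    {μ : ℝ} (hμ : 0 < μ) (d y : α → ℝ) :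
    ∫⁻ t, ENNReal.ofReal (d t ^ 2 / (μ + y t ^ 2) ^ 2) ∂ν =
      (∫⁻ t, ENNReal.ofReal ((√μ * d t / (μ + y t ^ 2)) ^ 2) ∂ν) * ENNReal.ofReal μ⁻¹ := by
  have hpoint (t : α) : d t ^ 2 / (μ + y t ^ 2) ^ 2 = (√μ * d t / (μ + y t ^ 2)) ^ 2 * μ⁻¹ := by
    rw [div_pow, mul_pow, sq_sqrt hμ.le]
    field_simp
  simp_rw [hpoint, ENNReal.ofReal_mul (sq_nonneg _)]
  exact lintegral_mul_const' _ _ ENNReal.ofReal_ne_top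

theorem integral_Ico_eq_sub_of_hasDerivWithinAt_of_tendsto {f f' : ℝ → ℝ} {a b L : ℝ}
    (hab : a < b) (hf : ∀ x ∈ Ico a b, HasDerivWithinAt f (f' x) (Ico a b) x)
    (hint : IntegrableOn f' (Ico a b)) (hb : Tendsto f (𝓝[<] b) (𝓝 L)) :
    ∫ x in Ico a b, f' x = L - f a := by
  rw [integral_Ico_eq_integral_Ioo, ← integral_Ioc_eq_integral_Ioo,
    ← intervalIntegral.integral_of_le hab.le]
  exact intervalIntegral.integral_eq_sub_of_hasDerivAt_of_tendsto hab
    (fun x hx => (hf x (Ioo_subset_Ico_self hx)).hasDerivAt (Ico_mem_nhds hx.1 hx.2))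
    ((intervalIntegrable_iff_integrableOn_Ico_of_le hab.le).2 hint)
    ((hf a ⟨le_rfl, hab⟩).continuousWithinAt.mono_of_mem_nhdsWithin (Ico_mem_nhdsGT hab)).tendsto
    hb

theorem ae_restrict_Ico_eq_iff_eqOn {μ : Measure ℝ} [μ.IsOpenPosMeasure] {f g : ℝ → ℝ} {a b : ℝ}
    (hf : ContinuousOn f (Ico a b)) (hg : ContinuousOn g (Ico a b)) :
    f =ᵐ[μ.restrict (Ico a b)] g ↔ EqOn f g (Ico a b) :=
  ⟨fun h => Measure.eqOn_Ico_of_ae_eq _ h hf hg,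
    fun h => (ae_restrict_iff' measurableSet_Ico).2 (ae_of_all _ h)⟩

/-- Tangent-law optimality (variance-preserving setting): for every `C¹` schedule
ratio `η` on `[0,1)` with `η(0) = 0` and `η(t) → +∞` as `t → 1⁻`, the (possibly
infinite) integral `∫₀¹ η'²/(μ + η²)² dt` is at least `π²/(4μ)`, with equality
iff `η(t) = √μ·tan((π/2)t)` on `[0,1)`. -/
theorem stmt_9 (μ : ℝ) (hμ : 0 < μ) (η : ℝ → ℝ)
    (hη : ContDiffOn ℝ 1 η (Set.Ico 0 1)) (h0 : η 0 = 0)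
    (hlim : Filter.Tendsto η (nhdsWithin 1 (Set.Iio 1)) Filter.atTop) :
    ENNReal.ofReal (Real.pi ^ 2 / (4 * μ)) ≤
      (∫⁻ t in Set.Ico (0 : ℝ) 1, ENNReal.ofReal
        ((derivWithin η (Set.Ico 0 1) t) ^ 2 / (μ + (η t) ^ 2) ^ 2))
    ∧ ((∫⁻ t in Set.Ico (0 : ℝ) 1, ENNReal.ofReal
          ((derivWithin η (Set.Ico 0 1) t) ^ 2 / (μ + (η t) ^ 2) ^ 2))
        = ENNReal.ofReal (Real.pi ^ 2 / (4 * μ))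
      ↔ ∀ t ∈ Set.Ico (0 : ℝ) 1, η t = Real.sqrt μ * Real.tan (Real.pi / 2 * t)) := by
  set S := Ico (0 : ℝ) 1
  set g : ℝ → ℝ := fun t => arctan (η t / √μ)
  set G : ℝ → ℝ := fun t => √μ * derivWithin η S t / (μ + η t ^ 2)
  have hg : ∀ t ∈ S, HasDerivWithinAt g (G t) S t := fun t ht =>
    hasDerivWithinAt_arctan_div_sqrt hμ (hη.differentiableOn one_ne_zero t ht).hasDerivWithinAt
  have hGcont : ContinuousOn G S :=
    (continuousOn_const.mul (hη.continuousOn_derivWithin (uniqueDiffOn_Ico 0 1) le_rfl)).div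
      (continuousOn_const.add (hη.continuousOn.pow 2)) fun t _ => by positivity
  have : IsProbabilityMeasure (volume.restrict S) := ⟨by simp [S]⟩
  have hmean (hint : IntegrableOn G S) : ∫ t in S, G t = π / 2 := by
    simpa [g, h0] using integral_Ico_eq_sub_of_hasDerivWithinAt_of_tendsto one_pos hg hint
      ((tendsto_arctan_atTop.comp (hlim.atTop_div_const (sqrt_pos.2 hμ))).mono_right
        nhdsWithin_le_nhds)
  have htan : G =ᵐ[volume.restrict S] (fun _ => π / 2) ↔ ∀ t ∈ S, η t = √μ * tan (π / 2 * t) := by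
    rw [ae_restrict_Ico_eq_iff_eqOn hGcont continuousOn_const,
      eqOn_const_iff_of_hasDerivWithinAt_Ico hg]
    refine forall₂_congr fun t ht => ?_
    simp only [g, h0, zero_div, arctan_zero, sub_zero, zero_add]
    exact arctan_div_eq_iff (sqrt_pos.2 hμ) (by nlinarith [pi_pos, ht.1])
      (by nlinarith [pi_pos, ht.2])
  have hπ : ENNReal.ofReal (π ^ 2 / (4 * μ)) =
      ENNReal.ofReal ((π / 2) ^ 2) * ENNReal.ofReal μ⁻¹ := by
    rw [← ENNReal.ofReal_mul (sq_nonneg _)]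
    ring_nf
  have hμ' : ENNReal.ofReal μ⁻¹ ≠ 0 := by simpa using hμ
  rw [lintegral_ofReal_sq_div_sq_add_sq _ hμ, hπ,
    ENNReal.mul_le_mul_iff_left hμ' ENNReal.ofReal_ne_top,
    ENNReal.mul_left_inj hμ' ENNReal.ofReal_ne_top, ← htan]
  exact ofReal_sq_le_lintegral_sq_and_eq_iff (hGcont.aestronglyMeasurable measurableSet_Ico) hmean
end

section
/- Let μ > 0 and σmax > 0. For every continuously differentiable function η : [0,1] → ℝ with η(0) = 0 and η(1) = σmax, the integral ∫₀¹ η'(t)² / (μ + η(t)²)² dt is at least (1/μ)·arctan(σmax/√μ)². Moreover, equality holds if and only if η(t) = √μ · tan( t · arctan(σmax/√μ) ) for all t ∈ [0,1]. -/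
/-!
Substituting `g = arctan (η / √μ)` turns the integrand into `g'² / μ`, and the boundary values give
`∫₀¹ g' = arctan (σmax / √μ)`. Cauchy–Schwarz `(∫₀¹ g')² ≤ ∫₀¹ g'²` yields the bound, with equality
exactly when `g'` is constant, i.e. `g t = t · arctan (σmax / √μ)`, which is the tangent law.
-/

open Real Set MeasureTheory intervalIntegral

section IntervalIntegral

variable {f : ℝ → ℝ} {a b : ℝ}

theorem integral_eq_zero_iff_eqOn_of_continuousOn_of_nonneg (hab : a < b)
    (hf : ContinuousOn f (Icc a b)) (hf₀ : ∀ x ∈ Icc a b, 0 ≤ f x) :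
    ∫ x in a..b, f x = 0 ↔ EqOn f 0 (Icc a b) := by
  have hfi : IntervalIntegrable f volume a b := hf.intervalIntegrable_of_Icc hab.le
  have hf₀' : 0 ≤ᵐ[volume.restrict (Ioc a b)] f :=
    ae_restrict_of_forall_mem measurableSet_Ioc fun x hx => hf₀ x (Ioc_subset_Icc_self hx)
  rw [integral_eq_zero_iff_of_le_of_nonneg_ae hab.le hf₀' hfi,
    Measure.restrict_congr_set Ioc_ae_eq_Icc]
  exact ⟨fun h => Measure.eqOn_Icc_of_ae_eq volume hab.ne h hf continuousOn_const,
    ae_restrict_of_forall_mem measurableSet_Icc⟩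

theorem integral_sq_sub_const (hab : a ≤ b) (hf : ContinuousOn f (Icc a b)) (c : ℝ) :
    ∫ x in a..b, (f x - c) ^ 2 =
      (∫ x in a..b, f x ^ 2) - 2 * c * (∫ x in a..b, f x) + c ^ 2 * (b - a) := by
  have hfi : IntervalIntegrable f volume a b := hf.intervalIntegrable_of_Icc hab
  have hf2i : IntervalIntegrable (fun x => f x ^ 2) volume a b :=
    (hf.pow 2).intervalIntegrable_of_Icc hab
  have hexpand : ∀ x, (f x - c) ^ 2 = f x ^ 2 - 2 * c * f x + c ^ 2 := fun x => by ring
  simp_rw [hexpand]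
  rw [integral_add (hf2i.sub (hfi.const_mul _)) intervalIntegrable_const,
    integral_sub hf2i (hfi.const_mul _), intervalIntegral.integral_const_mul,
    intervalIntegral.integral_const, smul_eq_mul, mul_comm (b - a)]

theorem mul_integral_sq_sub_sq_integral (hab : a < b) (hf : ContinuousOn f (Icc a b)) :
    (b - a) * (∫ x in a..b, f x ^ 2) - (∫ x in a..b, f x) ^ 2 =
      (b - a) * ∫ x in a..b, (f x - (∫ y in a..b, f y) / (b - a)) ^ 2 := by
  rw [integral_sq_sub_const hab.le hf]
  field_simp [(sub_pos.2 hab).ne']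
  ring

theorem sq_integral_le_mul_integral_sq (hab : a < b) (hf : ContinuousOn f (Icc a b)) :
    (∫ x in a..b, f x) ^ 2 ≤ (b - a) * ∫ x in a..b, f x ^ 2 := by
  rw [← sub_nonneg, mul_integral_sq_sub_sq_integral hab hf]
  exact mul_nonneg (sub_pos.2 hab).le (integral_nonneg hab.le fun _ _ => sq_nonneg _)

theorem sq_integral_eq_mul_integral_sq_iff (hab : a < b) (hf : ContinuousOn f (Icc a b)) :
    (∫ x in a..b, f x) ^ 2 = (b - a) * ∫ x in a..b, f x ^ 2 ↔
      EqOn f (fun _ => (∫ x in a..b, f x) / (b - a)) (Icc a b) := by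
  rw [eq_comm, ← sub_eq_zero, mul_integral_sq_sub_sq_integral hab hf,
    mul_eq_zero_iff_left (sub_pos.2 hab).ne',
    integral_eq_zero_iff_eqOn_of_continuousOn_of_nonneg (f := fun x => (f x - _) ^ 2) hab
      ((hf.sub continuousOn_const).pow 2) fun _ _ => sq_nonneg _]
  simp only [EqOn, Pi.zero_apply, pow_eq_zero_iff two_ne_zero, sub_eq_zero]

end IntervalIntegral

theorem HasDerivWithinAt.arctan_div {f : ℝ → ℝ} {f' r x : ℝ} {s : Set ℝ}
    (hf : HasDerivWithinAt f f' s x) (hr : r ≠ 0) :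
    HasDerivWithinAt (fun t => Real.arctan (f t / r)) (r * f' / (r ^ 2 + f x ^ 2)) s x := by
  convert (hf.div_const r).arctan using 1
  field_simp

theorem Real.arctan_div_eq_iff {y r θ : ℝ} (hr : r ≠ 0) (hθ : θ ∈ Ioo (-(π / 2)) (π / 2)) :
    arctan (y / r) = θ ↔ y = r * tan θ := by
  constructor
  · rintro rfl
    rw [tan_arctan, mul_div_cancel₀ _ hr]
  · rintro rfl
    rw [mul_div_cancel_left₀ _ hr, arctan_tan hθ.1 hθ.2]

theorem derivWithin_Icc_eqOn_const_iff {g : ℝ → ℝ} {a b : ℝ} (hab : a < b)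
    (hg : DifferentiableOn ℝ g (Icc a b)) (c : ℝ) :
    EqOn (derivWithin g (Icc a b)) (fun _ => c) (Icc a b) ↔
      EqOn g (fun t => g a + c * (t - a)) (Icc a b) := by
  have haffine : ∀ x ∈ Icc a b,
      derivWithin (fun t => g a + c * (t - a)) (Icc a b) x = c := fun x hx => by
    have : HasDerivAt (fun t => g a + c * (t - a)) c x := by
      simpa using ((hasDerivAt_id x).sub_const a).const_mul c |>.const_add (g a)
    exact this.hasDerivWithinAt.derivWithin (uniqueDiffOn_Icc hab x hx)
  constructor
  · intro h
    refine eq_of_derivWithin_eq hg (by fun_prop) (fun x hx => ?_) (by simp)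
    rw [h (Ico_subset_Icc_self hx), haffine x (Ico_subset_Icc_self hx)]
  · intro h x hx
    rw [derivWithin_congr h (h hx), haffine x hx]

/-- Tangent-law optimality (variance-exploding setting): for every `C¹` schedule
ratio `η` on `[0,1]` with `η(0) = 0` and `η(1) = σmax`, one has
`∫₀¹ η'²/(μ + η²)² dt ≥ (1/μ)·arctan(σmax/√μ)²`, with equality iff
`η(t) = √μ·tan(t·arctan(σmax/√μ))` on `[0,1]`. -/
theorem stmt_11 (μ σmax : ℝ) (hμ : 0 < μ) (hσmax : 0 < σmax) (η : ℝ → ℝ)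
    (hη : ContDiffOn ℝ 1 η (Set.Icc 0 1)) (h0 : η 0 = 0) (h1 : η 1 = σmax) :
    (1 / μ) * (Real.arctan (σmax / Real.sqrt μ)) ^ 2 ≤
      ∫ t in (0 : ℝ)..1, (derivWithin η (Set.Icc 0 1) t) ^ 2 / (μ + (η t) ^ 2) ^ 2
    ∧ ((∫ t in (0 : ℝ)..1, (derivWithin η (Set.Icc 0 1) t) ^ 2 / (μ + (η t) ^ 2) ^ 2)
        = (1 / μ) * (Real.arctan (σmax / Real.sqrt μ)) ^ 2
      ↔ ∀ t ∈ Set.Icc (0 : ℝ) 1,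
          η t = Real.sqrt μ * Real.tan (t * Real.arctan (σmax / Real.sqrt μ))) := by
  set r := √μ
  have hr : 0 < r := sqrt_pos.2 hμ
  have hr2 : r ^ 2 = μ := sq_sqrt hμ.le
  set A := arctan (σmax / r)
  set g := fun t => arctan (η t / r)
  have hg : ContDiffOn ℝ 1 g (Icc 0 1) := (hη.div_const r).arctan
  have hg' : ∀ t ∈ Icc (0 : ℝ) 1, derivWithin g (Icc 0 1) t =
      r * derivWithin η (Icc 0 1) t / (μ + η t ^ 2) := fun t ht => by
    rw [← hr2]
    exact ((hη.differentiableOn one_ne_zero t ht).hasDerivWithinAt.arctan_div hr.ne').derivWithin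
      (uniqueDiffOn_Icc zero_lt_one t ht)
  have hE : ∫ t in (0 : ℝ)..1, derivWithin η (Icc 0 1) t ^ 2 / (μ + η t ^ 2) ^ 2 =
      (∫ t in (0 : ℝ)..1, derivWithin g (Icc 0 1) t ^ 2) / μ := by
    rw [← intervalIntegral.integral_div]
    refine integral_congr fun t ht => ?_
    rw [uIcc_of_le zero_le_one] at ht
    simp only [hg' t ht]
    field_simp
    rw [hr2]
  have hA : ∫ t in (0 : ℝ)..1, derivWithin g (Icc 0 1) t = A := by
    simp [integral_derivWithin_Icc_of_contDiffOn_Icc hg zero_le_one, g, h0, h1, A]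
  have hg'c : ContinuousOn (derivWithin g (Icc 0 1)) (Icc 0 1) :=
    hg.continuousOn_derivWithin (uniqueDiffOn_Icc zero_lt_one) le_rfl
  have hle := sq_integral_le_mul_integral_sq zero_lt_one hg'c
  have heq := sq_integral_eq_mul_integral_sq_iff zero_lt_one hg'c
  simp only [hA, sub_zero, one_mul, div_one] at hle heq
  rw [hE, one_div_mul_eq_div, div_le_div_iff_of_pos_right hμ, div_left_inj' hμ.ne', eq_comm, heq,
    derivWithin_Icc_eqOn_const_iff zero_lt_one (hg.differentiableOn one_ne_zero)]
  refine ⟨hle, forall₂_congr fun t ht => ?_⟩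
  have hA₀ : 0 ≤ A := arctan_nonneg.2 (div_pos hσmax hr).le
  have htA : t * A ∈ Ioo (-(π / 2)) (π / 2) :=
    ⟨by linarith [pi_pos, mul_nonneg ht.1 hA₀],
      (mul_le_of_le_one_left hA₀ ht.2).trans_lt (arctan_lt_pi_div_two _)⟩
  simp only [g, h0, zero_div, arctan_zero, zero_add, sub_zero, mul_comm A]
  exact arctan_div_eq_iff hr.ne' htA
end

section
/- Let μ > 0 and γ > 0, and let η_γ : [0,1) → ℝ be given by η_γ(t) = √γ · tan((π/2)·t). Then the improper integral satisfies (μ/2) · ∫₀¹ η_γ'(t)² / (μ + η_γ(t)²)² dt = (π²/16) · ( √(μ/γ) + √(γ/μ) ). Equivalently, the leading-order error coefficient of the parameterized tangent-law schedule is E¹(γ) = −(π²/16)·( √(μ/γ) + √(γ/μ) ). -/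
open Filter Topology Set Real intervalIntegral

/-!
Substituting `u = tan (π t / 2)` turns the integral over `[0, T]` into
`γ (π/2) ∫₀^{tan (π T / 2)} (1 + u²) / (μ + γ u²)² du`, whose integrand splits as
`γ⁻¹ / (μ + γ u²) + (1 - μ / γ) / (μ + γ u²)²` and so has an elementary primitive
(`tanLawPrimitive`, with `μ = p²`, `γ = q²`). As `T → 1⁻` the rational part of the primitive
vanishes and only the arctangent survives, contributing its limit `π / 2`.
-/

noncomputable def tanLaw (q t : ℝ) : ℝ := q * tan (π / 2 * t)

noncomputable def tanLawPrimitive (p q u : ℝ) : ℝ :=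
  (p ^ 2 + q ^ 2) / (2 * p ^ 3 * q ^ 3) * arctan (q / p * u) +
    (q ^ 2 - p ^ 2) / (2 * p ^ 2 * q ^ 2) * (u / (p ^ 2 + q ^ 2 * u ^ 2))

theorem hasDerivAt_tanLawPrimitive {p q : ℝ} (hp : p ≠ 0) (hq : q ≠ 0) (u : ℝ) :
    HasDerivAt (tanLawPrimitive p q) ((1 + u ^ 2) / (p ^ 2 + q ^ 2 * u ^ 2) ^ 2) u := by
  have hden : p ^ 2 + q ^ 2 * u ^ 2 ≠ 0 := by positivity
  have harctan := ((hasDerivAt_id' u).const_mul (q / p)).arctan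
  have hrational := (hasDerivAt_id' u).div
    (((hasDerivAt_pow 2 u).const_mul (q ^ 2)).const_add (p ^ 2)) hden
  refine ((harctan.const_mul _).add (hrational.const_mul _)).congr_deriv ?_
  field_simp
  ring

theorem tendsto_div_const_add_sq_atTop (p : ℝ) {q : ℝ} (hq : q ≠ 0) :
    Tendsto (fun u : ℝ => u / (p ^ 2 + q ^ 2 * u ^ 2)) atTop (𝓝 0) := by
  have hrecip : Tendsto (fun u : ℝ => p ^ 2 / u + q ^ 2 * u) atTop atTop :=
    (tendsto_const_nhds.div_atTop tendsto_id).add_atTop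
      (tendsto_id.const_mul_atTop (by positivity))
  refine hrecip.inv_tendsto_atTop.congr' ?_
  filter_upwards [eventually_ne_atTop 0] with u hu
  show (p ^ 2 / u + q ^ 2 * u)⁻¹ = u / (p ^ 2 + q ^ 2 * u ^ 2)
  field_simp

theorem tendsto_tanLawPrimitive_atTop {p q : ℝ} (hp : 0 < p) (hq : 0 < q) :
    Tendsto (tanLawPrimitive p q) atTop
      (𝓝 ((p ^ 2 + q ^ 2) / (2 * p ^ 3 * q ^ 3) * (π / 2))) := by
  have harctan : Tendsto (fun u => arctan (q / p * u)) atTop (𝓝 (π / 2)) :=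
    (tendsto_arctan_atTop.mono_right nhdsWithin_le_nhds).comp
      (tendsto_id.const_mul_atTop (div_pos hq hp))
  have h := (harctan.const_mul ((p ^ 2 + q ^ 2) / (2 * p ^ 3 * q ^ 3))).add
    ((tendsto_div_const_add_sq_atTop p hq.ne').const_mul ((q ^ 2 - p ^ 2) / (2 * p ^ 2 * q ^ 2)))
  rwa [mul_zero, add_zero] at h

theorem cos_pi_div_two_mul_pos {t : ℝ} (ht : t ∈ Ioo (-1) 1) : 0 < cos (π / 2 * t) :=
  cos_pos_of_mem_Ioo ⟨by nlinarith [pi_pos, ht.1], by nlinarith [pi_pos, ht.2]⟩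

theorem tendsto_tan_pi_div_two_mul_nhdsLT_one :
    Tendsto (fun T => tan (π / 2 * T)) (𝓝[<] 1) atTop := by
  refine tendsto_tan_pi_div_two.comp (tendsto_nhdsWithin_of_tendsto_nhds_of_eventually_within _ ?_ ?_)
  · simpa using ((continuous_const_mul (π / 2)).tendsto 1).mono_left nhdsWithin_le_nhds
  · filter_upwards [self_mem_nhdsWithin] with T (hT : T < 1)
    show π / 2 * T < π / 2
    nlinarith [pi_pos]

theorem hasDerivAt_tan_pi_div_two_mul {t : ℝ} (ht : cos (π / 2 * t) ≠ 0) :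
    HasDerivAt (fun t => tan (π / 2 * t)) (π / 2 * (1 + tan (π / 2 * t) ^ 2)) t := by
  refine ((hasDerivAt_tan ht).comp t ((hasDerivAt_id t).const_mul (π / 2))).congr_deriv ?_
  rw [one_div, ← inv_one_add_tan_sq ht, inv_inv, mul_one, mul_comm]

theorem hasDerivAt_tanLaw (q : ℝ) {t : ℝ} (ht : cos (π / 2 * t) ≠ 0) :
    HasDerivAt (tanLaw q) (q * (π / 2) * (1 + tan (π / 2 * t) ^ 2)) t := by
  rw [mul_assoc]
  exact (hasDerivAt_tan_pi_div_two_mul ht).const_mul q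

theorem continuousOn_tan_pi_div_two_mul : ContinuousOn (fun t => tan (π / 2 * t)) (Ioo (-1) 1) :=
  continuousOn_tan.comp (by fun_prop) fun _ ht => (cos_pi_div_two_mul_pos ht).ne'

theorem hasDerivAt_tanLawPrimitive_comp_tan {p q t : ℝ} (hp : p ≠ 0) (hq : q ≠ 0)
    (ht : cos (π / 2 * t) ≠ 0) :
    HasDerivAt (fun t => q ^ 2 * (π / 2) * tanLawPrimitive p q (tan (π / 2 * t)))
      (deriv (tanLaw q) t ^ 2 / (p ^ 2 + tanLaw q t ^ 2) ^ 2) t := by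
  refine (((hasDerivAt_tanLawPrimitive hp hq _).comp t (hasDerivAt_tan_pi_div_two_mul ht)).const_mul
    (q ^ 2 * (π / 2))).congr_deriv ?_
  rw [(hasDerivAt_tanLaw q ht).deriv, tanLaw]
  have hden : p ^ 2 + q ^ 2 * tan (π / 2 * t) ^ 2 ≠ 0 := by positivity
  field_simp

theorem integral_sq_deriv_tanLaw {p q T : ℝ} (hp : p ≠ 0) (hq : q ≠ 0) (hT : T ∈ Ioo (-1) 1) :
    ∫ t in 0..T, deriv (tanLaw q) t ^ 2 / (p ^ 2 + tanLaw q t ^ 2) ^ 2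
      = q ^ 2 * (π / 2) * tanLawPrimitive p q (tan (π / 2 * T)) := by
  have hsub : uIcc 0 T ⊆ Ioo (-1) 1 :=
    ordConnected_Ioo.uIcc_subset ⟨by norm_num, by norm_num⟩ hT
  have hderiv : EqOn (deriv (tanLaw q)) (fun t => q * (π / 2) * (1 + tan (π / 2 * t) ^ 2))
      (Ioo (-1) 1) := fun t ht => (hasDerivAt_tanLaw q (cos_pi_div_two_mul_pos ht).ne').deriv
  have htan := continuousOn_tan_pi_div_two_mul
  have hcont : ContinuousOn (fun t => deriv (tanLaw q) t ^ 2 / (p ^ 2 + tanLaw q t ^ 2) ^ 2)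
      (Ioo (-1) 1) := by
    refine ContinuousOn.div ?_ ?_ fun t _ => by positivity
    · exact (ContinuousOn.congr (by fun_prop) hderiv).pow 2
    · unfold tanLaw; fun_prop
  rw [integral_eq_sub_of_hasDerivAt
    (fun t ht => hasDerivAt_tanLawPrimitive_comp_tan hp hq (cos_pi_div_two_mul_pos (hsub ht)).ne')
    ((hcont.mono hsub).intervalIntegrable)]
  simp [tanLawPrimitive]

/-- For the parameterized tangent-law schedule `η_γ(t) = √γ·tan((π/2)t)`, the
improper integral satisfies
`(μ/2)·∫₀¹ η_γ'²/(μ + η_γ²)² dt = (π²/16)·(√(μ/γ) + √(γ/μ))`; equivalently the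
leading-order error coefficient is `E¹(γ) = −(π²/16)·(√(μ/γ) + √(γ/μ))`. -/
theorem stmt_12 (μ γ : ℝ) (hμ : 0 < μ) (hγ : 0 < γ) (η : ℝ → ℝ)
    (hη : ∀ t, η t = Real.sqrt γ * Real.tan (Real.pi / 2 * t)) :
    Tendsto (fun T : ℝ => (μ / 2) * ∫ t in (0 : ℝ)..T,
        (deriv η t) ^ 2 / (μ + (η t) ^ 2) ^ 2)
      (nhdsWithin 1 (Set.Iio 1))
      (nhds ((Real.pi ^ 2 / 16) * (Real.sqrt (μ / γ) + Real.sqrt (γ / μ)))) := by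
  obtain ⟨p, hp, rfl⟩ : ∃ p, 0 < p ∧ p ^ 2 = μ := ⟨√μ, sqrt_pos.2 hμ, sq_sqrt hμ.le⟩
  obtain ⟨q, hq, rfl⟩ : ∃ q, 0 < q ∧ q ^ 2 = γ := ⟨√γ, sqrt_pos.2 hγ, sq_sqrt hγ.le⟩
  obtain rfl : η = tanLaw q := funext fun t => by rw [hη, sqrt_sq hq.le, tanLaw]
  have hlim := ((tendsto_tanLawPrimitive_atTop hp hq).comp
    tendsto_tan_pi_div_two_mul_nhdsLT_one).const_mul (p ^ 2 / 2 * (q ^ 2 * (π / 2)))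
  have hval : p ^ 2 / 2 * (q ^ 2 * (π / 2)) * ((p ^ 2 + q ^ 2) / (2 * p ^ 3 * q ^ 3) * (π / 2))
      = π ^ 2 / 16 * (√(p ^ 2 / q ^ 2) + √(q ^ 2 / p ^ 2)) := by
    rw [← div_pow, ← div_pow, sqrt_sq (by positivity), sqrt_sq (by positivity)]
    field_simp
    ring
  rw [← hval]
  refine hlim.congr' ?_
  filter_upwards [Ioo_mem_nhdsLT (show (0 : ℝ) < 1 by norm_num)] with T hT
  rw [Function.comp_apply, integral_sq_deriv_tanLaw hp.ne' hq.ne' ⟨by linarith [hT.1], hT.2⟩]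
  ring
end

section
/- Let μ > 0, γ > 0 and Θ ∈ (0, π/2). Then (μ·γ·Θ/2) · ∫₀^Θ dx / (μ + (γ − μ)·sin²x)² = (Θ/4) · [ ((μ + γ)/√(μγ)) · arctan( √(γ/μ) · tan Θ ) + ((γ − μ)·tan Θ)/(μ + γ·tan² Θ) ]. -/
/-!
The substitution `t = tan x` turns `a + (b - a) sin² x` into `(a + b t²) / (1 + t²)` and `dx`
into `dt / (1 + t²)`, so the integrand becomes the rational function `(1 + t²) / (a + b t²)²`,
whose primitive is, up to the factor `2ab`, an arctangent term plus the rational term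
`(b - a) t / (a + b t²)`.
-/

open Real Set

namespace TangentLaw

variable {a b : ℝ}

/-- `2ab` times a primitive of `(1 + t²) / (a + b t²)²`. -/
noncomputable def tanPrimitive (a b t : ℝ) : ℝ :=
  (a + b) / √(a * b) * arctan (√(b / a) * t) + (b - a) * t / (a + b * t ^ 2)

lemma add_sub_mul_sin_sq_pos (ha : 0 < a) (hb : 0 < b) (x : ℝ) :
    0 < a + (b - a) * sin x ^ 2 := by
  rcases le_or_gt a b with h | h
  · nlinarith [sq_nonneg (sin x)]
  · nlinarith [sin_sq_le_one x]

lemma add_sub_mul_sin_sq_eq_div {x : ℝ} (hx : cos x ≠ 0) (a b : ℝ) :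
    a + (b - a) * sin x ^ 2 = (a + b * tan x ^ 2) / (1 + tan x ^ 2) := by
  rw [add_div, div_eq_mul_inv a, inv_one_add_tan_sq hx, mul_div_assoc,
    tan_sq_div_one_add_tan_sq hx]
  linear_combination (-a) * sin_sq_add_cos_sq x

lemma hasDerivAt_tanPrimitive (ha : 0 < a) (hb : 0 < b) (t : ℝ) :
    HasDerivAt (tanPrimitive a b) (2 * a * b * (1 + t ^ 2) / (a + b * t ^ 2) ^ 2) t := by
  have hden : 0 < a + b * t ^ 2 := by positivity
  have harctan := ((hasDerivAt_id' t).const_mul √(b / a)).arctan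
  have hrational := ((hasDerivAt_id' t).const_mul (b - a)).div
    (((hasDerivAt_pow 2 t).const_mul b).const_add a) hden.ne'
  have harctan_coeff : (a + b) / √(a * b) * (1 / (1 + (√(b / a) * t) ^ 2) * √(b / a))
      = (a + b) / (a + b * t ^ 2) := by
    have hsa : 0 < √a := sqrt_pos.2 ha
    have hsb : 0 < √b := sqrt_pos.2 hb
    rw [sqrt_div' _ ha.le, sqrt_mul ha.le]
    field_simp
    rw [sq_sqrt ha.le, sq_sqrt hb.le]
  refine ((harctan.const_mul ((a + b) / √(a * b))).add hrational).congr_deriv ?_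
  rw [mul_one, harctan_coeff]
  field_simp
  ring

lemma hasDerivAt_tanPrimitive_tan (ha : 0 < a) (hb : 0 < b) {x : ℝ} (hx : cos x ≠ 0) :
    HasDerivAt (fun x => tanPrimitive a b (tan x))
      (2 * a * b / (a + (b - a) * sin x ^ 2) ^ 2) x := by
  refine ((hasDerivAt_tanPrimitive ha hb (tan x)).comp x (hasDerivAt_tan hx)).congr_deriv ?_
  have hcos : 1 / cos x ^ 2 = 1 + tan x ^ 2 := by rw [← inv_one_add_tan_sq hx, one_div, inv_inv]
  rw [hcos, add_sub_mul_sin_sq_eq_div hx]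
  field_simp

lemma integral_one_div_add_sub_mul_sin_sq_sq (ha : 0 < a) (hb : 0 < b) {α β : ℝ}
    (hα : α ∈ Ioo (-(π / 2)) (π / 2)) (hβ : β ∈ Ioo (-(π / 2)) (π / 2)) :
    ∫ x in α..β, 1 / (a + (b - a) * sin x ^ 2) ^ 2
      = (tanPrimitive a b (tan β) - tanPrimitive a b (tan α)) / (2 * a * b) := by
  have hderiv : ∀ x ∈ uIcc α β, HasDerivAt (fun x => tanPrimitive a b (tan x))
      (2 * a * b / (a + (b - a) * sin x ^ 2) ^ 2) x := fun x hx =>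
    hasDerivAt_tanPrimitive_tan ha hb
      (cos_pos_of_mem_Ioo (ordConnected_Ioo.uIcc_subset hα hβ hx)).ne'
  have hcont : Continuous fun x => 2 * a * b / (a + (b - a) * sin x ^ 2) ^ 2 :=
    continuous_const.div (by fun_prop) fun x => (pow_pos (add_sub_mul_sin_sq_pos ha hb x) 2).ne'
  rw [← intervalIntegral.integral_eq_sub_of_hasDerivAt hderiv (hcont.intervalIntegrable α β),
    eq_div_iff (by positivity), ← intervalIntegral.integral_mul_const]
  congr 1 with x
  ring

end TangentLaw

open TangentLaw in
/-- Closed-form evaluation of the leading-order error coefficient (up to sign)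
of the parameterized tangent-law schedule:
`(μγΘ/2)·∫₀^Θ dx/(μ + (γ−μ)sin²x)²` equals
`(Θ/4)·[((μ+γ)/√(μγ))·arctan(√(γ/μ)·tanΘ) + ((γ−μ)·tanΘ)/(μ + γ·tan²Θ)]`. -/
theorem stmt_13 (μ γ Θ : ℝ) (hμ : 0 < μ) (hγ : 0 < γ)
    (hΘ0 : 0 < Θ) (hΘ : Θ < Real.pi / 2) :
    (μ * γ * Θ / 2) * ∫ x in (0 : ℝ)..Θ, 1 / (μ + (γ - μ) * (Real.sin x) ^ 2) ^ 2
      = (Θ / 4) * (((μ + γ) / Real.sqrt (μ * γ))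
            * Real.arctan (Real.sqrt (γ / μ) * Real.tan Θ)
          + ((γ - μ) * Real.tan Θ) / (μ + γ * (Real.tan Θ) ^ 2)) := by
  have hzero : (0 : ℝ) ∈ Ioo (-(π / 2)) (π / 2) := by constructor <;> linarith [pi_pos]
  rw [integral_one_div_add_sub_mul_sin_sq_sq hμ hγ hzero ⟨by linarith, hΘ⟩]
  simp only [tanPrimitive, tan_zero, mul_zero, arctan_zero, zero_div, add_zero, sub_zero]
  field_simp
  ring
end
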